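/- arXiv:2206.04044 — 5 statements merged into one kernel-verified Lean document; each statement's English description precedes it below -/
import Mathlib

section
/- Let γ ∈ [1/2,1). For any Q₁, Q₂ : 𝒮×𝒜×ℬ → [0, 1/(1−γ)] with Q₁ ≥ Q₂ entrywise, the pessimistic Bellman operators are monotone: T̂⁻(Q₁) ≥ T̂⁻(Q₂) and T̂⁺(Q₁) ≥ T̂⁺(Q₂) entrywise. -/
open scoped BigOperators ENNReal Classical

noncomputable section

namespace ZSMG

variable {𝒮 𝒜 ℬ : Type} [Fintype 𝒮] [Fintype 𝒜] [Fintype ℬ]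
  [DecidableEq 𝒮] [DecidableEq 𝒜] [DecidableEq ℬ]

/-- Expectation of `V : 𝒮 → ℝ` under the (sub)probability vector `p`. -/
def Pexp (p V : 𝒮 → ℝ) : ℝ := ∑ s', p s' * V s'

/-- Variance of `V` under `p`: `Var_p(V) = p(V∘V) − (pV)²`. -/
def varP (p V : 𝒮 → ℝ) : ℝ := Pexp p (fun s => V s * V s) - (Pexp p V) ^ 2

/-- Payoff of mixed strategies `w, z` in the matrix game `M`. -/
def pay (M : 𝒜 → ℬ → ℝ) (w : 𝒜 → ℝ) (z : ℬ → ℝ) : ℝ :=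
  ∑ a, ∑ b, w a * z b * M a b

/-- Value function associated with a Q-function: minimax value at each state. -/
def valQ (Q : 𝒮 → 𝒜 → ℬ → ℝ) (s : 𝒮) : ℝ :=
  ⨆ w : stdSimplex ℝ 𝒜, ⨅ z : stdSimplex ℝ ℬ, pay (Q s) w.1 z.1

/-- Sup norm over states. -/
def supNormS (f : 𝒮 → ℝ) : ℝ := ⨆ s, |f s|

/-- Sup norm over state-action triples. -/
def supNormQ (f : 𝒮 → 𝒜 → ℬ → ℝ) : ℝ := ⨆ s, ⨆ a, ⨆ b, |f s a b|

/-- The Bernstein-style penalty `β(s,a,b;V)`; `n` is the count `N(s,a,b)` and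
`p` is the row `P̂(·|s,a,b)` of the empirical kernel. -/
def penalty (γ δ Cb : ℝ) (N n : ℕ) (p V : 𝒮 → ℝ) : ℝ :=
  (if n = 0 then 1 / (1 - γ)
   else
     min
       (max (Real.sqrt (Cb * Real.log ((N : ℝ) / ((1 - γ) * δ)) * varP p V / (n : ℝ)))
         (2 * Cb * Real.log ((N : ℝ) / ((1 - γ) * δ)) / ((1 - γ) * (n : ℝ))))
       (1 / (1 - γ))) + 4 / (N : ℝ)

/-- The pessimistic Bellman operator for the max-player. -/
def TpeMinus (γ δ Cb : ℝ) (N : ℕ) (n : 𝒮 → 𝒜 → ℬ → ℕ)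
    (Ph : 𝒮 → 𝒜 → ℬ → 𝒮 → ℝ) (rh : 𝒮 → 𝒜 → ℬ → ℝ)
    (Q : 𝒮 → 𝒜 → ℬ → ℝ) : 𝒮 → 𝒜 → ℬ → ℝ := fun s a b =>
  max (rh s a b + γ * Pexp (Ph s a b) (valQ Q)
        - penalty γ δ Cb N (n s a b) (Ph s a b) (valQ Q)) 0

/-- The pessimistic Bellman operator for the min-player. -/
def TpePlus (γ δ Cb : ℝ) (N : ℕ) (n : 𝒮 → 𝒜 → ℬ → ℕ)
    (Ph : 𝒮 → 𝒜 → ℬ → 𝒮 → ℝ) (rh : 𝒮 → 𝒜 → ℬ → ℝ)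
    (Q : 𝒮 → 𝒜 → ℬ → ℝ) : 𝒮 → 𝒜 → ℬ → ℝ := fun s a b =>
  min (rh s a b + γ * Pexp (Ph s a b) (valQ Q)
        + penalty γ δ Cb N (n s a b) (Ph s a b) (valQ Q)) (1 / (1 - γ))

/-- Count `N(s,a,b)` of occurrences of `(s,a,b)` in the dataset `D`. -/
def cnt {N : ℕ} (D : Fin N → 𝒮 × 𝒜 × ℬ × 𝒮) (s : 𝒮) (a : 𝒜) (b : ℬ) : ℕ :=
  (Finset.univ.filter fun i => (D i).1 = s ∧ (D i).2.1 = a ∧ (D i).2.2.1 = b).card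

/-- Count of full transitions `(s,a,b,s')` in the dataset `D`. -/
def cntT {N : ℕ} (D : Fin N → 𝒮 × 𝒜 × ℬ × 𝒮) (s : 𝒮) (a : 𝒜) (b : ℬ) (s' : 𝒮) : ℕ :=
  (Finset.univ.filter fun i => D i = (s, a, b, s')).card

/-- Empirical transition kernel `P̂(·|s,a,b)` built from the dataset. -/
def Phat {N : ℕ} (D : Fin N → 𝒮 × 𝒜 × ℬ × 𝒮) (s : 𝒮) (a : 𝒜) (b : ℬ) : 𝒮 → ℝ := fun s' =>
  if cnt D s a b = 0 then ((Fintype.card 𝒮 : ℝ))⁻¹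
  else (cntT D s a b s' : ℝ) / (cnt D s a b : ℝ)

/-- Empirical reward `r̂` built from the dataset. -/
def rhat {N : ℕ} (r : 𝒮 → 𝒜 → ℬ → ℝ) (D : Fin N → 𝒮 × 𝒜 × ℬ × 𝒮)
    (s : 𝒮) (a : 𝒜) (b : ℬ) : ℝ :=
  if cnt D s a b = 0 then 0 else r s a b

/-- Number of iterations `T = ⌈log(N/(1−γ))/log(1/γ)⌉` of VI-LCB-Game. -/
def Titer (γ : ℝ) (N : ℕ) : ℕ := ⌈Real.log ((N : ℝ) / (1 - γ)) / Real.log (1 / γ)⌉₊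

/-- `Q_pe^− = Q⁻_T` produced by VI-LCB-Game on the dataset `D`. -/
def QpeMinus (γ δ Cb : ℝ) (r : 𝒮 → 𝒜 → ℬ → ℝ) {N : ℕ}
    (D : Fin N → 𝒮 × 𝒜 × ℬ × 𝒮) : 𝒮 → 𝒜 → ℬ → ℝ :=
  (TpeMinus γ δ Cb N (cnt D) (Phat D) (rhat r D))^[Titer γ N] (fun _ _ _ => 0)

/-- `Q_pe^+ = Q⁺_T` produced by VI-LCB-Game on the dataset `D`. -/
def QpePlus (γ δ Cb : ℝ) (r : 𝒮 → 𝒜 → ℬ → ℝ) {N : ℕ}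
    (D : Fin N → 𝒮 × 𝒜 × ℬ × 𝒮) : 𝒮 → 𝒜 → ℬ → ℝ :=
  (TpePlus γ δ Cb N (cnt D) (Phat D) (rhat r D))^[Titer γ N] (fun _ _ _ => 1 / (1 - γ))

/-- `(w,z)` is a (mixed) Nash equilibrium / saddle point of the matrix game `M`. -/
def IsMatrixNash (M : 𝒜 → ℬ → ℝ) (w : 𝒜 → ℝ) (z : ℬ → ℝ) : Prop :=
  w ∈ stdSimplex ℝ 𝒜 ∧ z ∈ stdSimplex ℝ ℬ ∧
    (∀ w' ∈ stdSimplex ℝ 𝒜, pay M w' z ≤ pay M w z) ∧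
    (∀ z' ∈ stdSimplex ℝ ℬ, pay M w z ≤ pay M w z')

/-- `μ` is a possible max-player output of the algorithm, given the final Q-estimate `Q`. -/
def IsOutputMax (Q : 𝒮 → 𝒜 → ℬ → ℝ) (μ : 𝒮 → 𝒜 → ℝ) : Prop :=
  ∀ s, ∃ z, IsMatrixNash (Q s) (μ s) z

/-- `ν` is a possible min-player output of the algorithm, given the final Q-estimate `Q`. -/
def IsOutputMin (Q : 𝒮 → 𝒜 → ℬ → ℝ) (ν : 𝒮 → ℬ → ℝ) : Prop :=
  ∀ s, ∃ w, IsMatrixNash (Q s) w (ν s)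

/-- `μ` is a stationary (Markov) policy. -/
def IsPolicy (μ : 𝒮 → 𝒜 → ℝ) : Prop := ∀ s, μ s ∈ stdSimplex ℝ 𝒜

/-- `P` is a probability transition kernel. -/
def IsKernel (P : 𝒮 → 𝒜 → ℬ → 𝒮 → ℝ) : Prop := ∀ s a b, P s a b ∈ stdSimplex ℝ 𝒮

/-- `r` is a reward function with values in `[0,1]`. -/
def IsReward (r : 𝒮 → 𝒜 → ℬ → ℝ) : Prop := ∀ s a b, r s a b ∈ Set.Icc (0 : ℝ) 1

/-- `d` is a probability distribution over `𝒮 × 𝒜 × ℬ`. -/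
def IsDist3 (d : 𝒮 → 𝒜 → ℬ → ℝ) : Prop :=
  (∀ s a b, 0 ≤ d s a b) ∧ (∑ s, ∑ a, ∑ b, d s a b) = 1

/-- Transition matrix `P^{μ,ν}` of the product policy `μ × ν`. -/
def Pmat (P : 𝒮 → 𝒜 → ℬ → 𝒮 → ℝ) (μ : 𝒮 → 𝒜 → ℝ) (ν : 𝒮 → ℬ → ℝ) :
    Matrix 𝒮 𝒮 ℝ :=
  Matrix.of fun s s' => ∑ a, ∑ b, μ s a * ν s b * P s a b s'

/-- Reward vector `r^{μ,ν}` of the product policy `μ × ν`. -/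
def rPol (r : 𝒮 → 𝒜 → ℬ → ℝ) (μ : 𝒮 → 𝒜 → ℝ) (ν : 𝒮 → ℬ → ℝ) : 𝒮 → ℝ :=
  fun s => ∑ a, ∑ b, μ s a * ν s b * r s a b

/-- Value function `V^{μ,ν} = (I − γP^{μ,ν})⁻¹ r^{μ,ν}`. -/
def Vpol (γ : ℝ) (P : 𝒮 → 𝒜 → ℬ → 𝒮 → ℝ) (r : 𝒮 → 𝒜 → ℬ → ℝ)
    (μ : 𝒮 → 𝒜 → ℝ) (ν : 𝒮 → ℬ → ℝ) : 𝒮 → ℝ :=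
  Matrix.mulVec ((1 : Matrix 𝒮 𝒮 ℝ) - γ • Pmat P μ ν)⁻¹ (rPol r μ ν)

/-- `V^{μ,⋆}(s) = min_ν V^{μ,ν}(s)`. -/
def VmuStar (γ : ℝ) (P : 𝒮 → 𝒜 → ℬ → 𝒮 → ℝ) (r : 𝒮 → 𝒜 → ℬ → ℝ)
    (μ : 𝒮 → 𝒜 → ℝ) : 𝒮 → ℝ := fun s =>
  ⨅ ν : {ν : 𝒮 → ℬ → ℝ // IsPolicy ν}, Vpol γ P r μ ν.1 s

/-- `V^{⋆,ν}(s) = max_μ V^{μ,ν}(s)`. -/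
def VstarNu (γ : ℝ) (P : 𝒮 → 𝒜 → ℬ → 𝒮 → ℝ) (r : 𝒮 → 𝒜 → ℬ → ℝ)
    (ν : 𝒮 → ℬ → ℝ) : 𝒮 → ℝ := fun s =>
  ⨆ μ : {μ : 𝒮 → 𝒜 → ℝ // IsPolicy μ}, Vpol γ P r μ.1 ν s

/-- `Q^{μ,ν}(s,a,b) = r(s,a,b) + γ P(·|s,a,b) V^{μ,ν}`. -/
def Qpol (γ : ℝ) (P : 𝒮 → 𝒜 → ℬ → 𝒮 → ℝ) (r : 𝒮 → 𝒜 → ℬ → ℝ)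
    (μ : 𝒮 → 𝒜 → ℝ) (ν : 𝒮 → ℬ → ℝ) : 𝒮 → 𝒜 → ℬ → ℝ := fun s a b =>
  r s a b + γ * Pexp (P s a b) (Vpol γ P r μ ν)

/-- `Q^{μ,⋆}(s,a,b) = min_ν Q^{μ,ν}(s,a,b)`. -/
def QmuStar (γ : ℝ) (P : 𝒮 → 𝒜 → ℬ → 𝒮 → ℝ) (r : 𝒮 → 𝒜 → ℬ → ℝ)
    (μ : 𝒮 → 𝒜 → ℝ) : 𝒮 → 𝒜 → ℬ → ℝ := fun s a b =>
  ⨅ ν : {ν : 𝒮 → ℬ → ℝ // IsPolicy ν}, Qpol γ P r μ ν.1 s a b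

/-- `Q^{⋆,ν}(s,a,b) = max_μ Q^{μ,ν}(s,a,b)`. -/
def QstarNu (γ : ℝ) (P : 𝒮 → 𝒜 → ℬ → 𝒮 → ℝ) (r : 𝒮 → 𝒜 → ℬ → ℝ)
    (ν : 𝒮 → ℬ → ℝ) : 𝒮 → 𝒜 → ℬ → ℝ := fun s a b =>
  ⨆ μ : {μ : 𝒮 → 𝒜 → ℝ // IsPolicy μ}, Qpol γ P r μ.1 ν s a b

/-- `(μs, νs)` is a Nash equilibrium of the Markov game. -/
def IsNashPair (γ : ℝ) (P : 𝒮 → 𝒜 → ℬ → 𝒮 → ℝ) (r : 𝒮 → 𝒜 → ℬ → ℝ)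
    (μs : 𝒮 → 𝒜 → ℝ) (νs : 𝒮 → ℬ → ℝ) : Prop :=
  IsPolicy μs ∧ IsPolicy νs ∧
    (∀ μ, IsPolicy μ → ∀ s, Vpol γ P r μ νs s ≤ Vpol γ P r μs νs s) ∧
    (∀ ν, IsPolicy ν → ∀ s, Vpol γ P r μs νs s ≤ Vpol γ P r μs ν s)

/-- `V(ρ) = Σ_s ρ(s) V(s)`. -/
def wAvg (ρ V : 𝒮 → ℝ) : ℝ := ∑ s, ρ s * V s

/-- Discounted occupancy measure `d^{μ,ν}(s;ρ) = (1−γ) ρᵀ(I−γP^{μ,ν})⁻¹`. -/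
def dOcc (γ : ℝ) (P : 𝒮 → 𝒜 → ℬ → 𝒮 → ℝ) (μ : 𝒮 → 𝒜 → ℝ) (ν : 𝒮 → ℬ → ℝ)
    (ρ : 𝒮 → ℝ) : 𝒮 → ℝ := fun s =>
  (1 - γ) * Matrix.vecMul ρ ((1 : Matrix 𝒮 𝒮 ℝ) - γ • Pmat P μ ν)⁻¹ s

/-- `d^{μ,ν}(s,a,b;ρ) = d^{μ,ν}(s;ρ) μ(a|s) ν(b|s)`. -/
def dOcc3 (γ : ℝ) (P : 𝒮 → 𝒜 → ℬ → 𝒮 → ℝ) (μ : 𝒮 → 𝒜 → ℝ) (ν : 𝒮 → ℬ → ℝ)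
    (ρ : 𝒮 → ℝ) : 𝒮 → 𝒜 → ℬ → ℝ := fun s a b =>
  dOcc γ P μ ν ρ s * μ s a * ν s b

/-- Clipped unilateral concentrability coefficient `C⋆_clipped` (in `ℝ≥0∞`;
note that in `ℝ≥0∞` one has `x/0 = ∞` for `x ≠ 0` and `0/0 = 0`, matching the
convention of the paper). -/
def clipCoeff (γ : ℝ) (P : 𝒮 → 𝒜 → ℬ → 𝒮 → ℝ) (ρ : 𝒮 → ℝ) (d : 𝒮 → 𝒜 → ℬ → ℝ)
    (μs : 𝒮 → 𝒜 → ℝ) (νs : 𝒮 → ℬ → ℝ) : ℝ≥0∞ :=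
  max
    (⨆ (μ : {μ : 𝒮 → 𝒜 → ℝ // IsPolicy μ}) (s : 𝒮) (a : 𝒜) (b : ℬ),
      ENNReal.ofReal
          (min (dOcc3 γ P μ.1 νs ρ s a b)
            ((Fintype.card 𝒮 * (Fintype.card 𝒜 + Fintype.card ℬ) : ℝ))⁻¹) /
        ENNReal.ofReal (d s a b))
    (⨆ (ν : {ν : 𝒮 → ℬ → ℝ // IsPolicy ν}) (s : 𝒮) (a : 𝒜) (b : ℬ),
      ENNReal.ofReal
          (min (dOcc3 γ P μs ν.1 ρ s a b)
            ((Fintype.card 𝒮 * (Fintype.card 𝒜 + Fintype.card ℬ) : ℝ))⁻¹) /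
        ENNReal.ofReal (d s a b))

/-- Probability weight of an individual dataset under `(d_b, P)`. -/
def dsWeight {N : ℕ} (d : 𝒮 → 𝒜 → ℬ → ℝ) (P : 𝒮 → 𝒜 → ℬ → 𝒮 → ℝ)
    (D : Fin N → 𝒮 × 𝒜 × ℬ × 𝒮) : ℝ :=
  ∏ i, d (D i).1 (D i).2.1 (D i).2.2.1 * P (D i).1 (D i).2.1 (D i).2.2.1 (D i).2.2.2

/-- Probability of an event over the offline dataset. -/
def dsProb {N : ℕ} (d : 𝒮 → 𝒜 → ℬ → ℝ) (P : 𝒮 → 𝒜 → ℬ → 𝒮 → ℝ)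
    (E : Set (Fin N → 𝒮 × 𝒜 × ℬ × 𝒮)) : ℝ :=
  ∑ D : Fin N → 𝒮 × 𝒜 × ℬ × 𝒮, E.indicator (dsWeight d P) D

/-- Expectation of a function of the offline dataset. -/
def dsExp {N : ℕ} (d : 𝒮 → 𝒜 → ℬ → ℝ) (P : 𝒮 → 𝒜 → ℬ → 𝒮 → ℝ)
    (g : (Fin N → 𝒮 × 𝒜 × ℬ × 𝒮) → ℝ) : ℝ :=
  ∑ D : Fin N → 𝒮 × 𝒜 × ℬ × 𝒮, dsWeight d P D * g D

/-- Dirac (deterministic) policy for the min-player. -/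
def diracB (f : 𝒮 → ℬ) : 𝒮 → ℬ → ℝ := fun s b => if b = f s then 1 else 0

/-- Binomial pmf. -/
def binomPMF (n : ℕ) (p : ℝ) (k : ℕ) : ℝ :=
  (n.choose k : ℝ) * p ^ k * (1 - p) ^ (n - k)

/-- Probability of a set of outcomes under a `Binomial(n,p)` distribution. -/
def binomProb (n : ℕ) (p : ℝ) (E : Set ℕ) : ℝ :=
  ∑ k ∈ Finset.range (n + 1), E.indicator (binomPMF n p) k

/-- Weight of an i.i.d. sample from a distribution on a finite set. -/
def iidWeight {𝒳 : Type} {N : ℕ} (d : 𝒳 → ℝ) (ω : Fin N → 𝒳) : ℝ := ∏ i, d (ω i)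

/-- Probability of an event for `N` i.i.d. draws from `d`. -/
def iidProb {𝒳 : Type} [Fintype 𝒳] {N : ℕ} (d : 𝒳 → ℝ) (E : Set (Fin N → 𝒳)) : ℝ :=
  ∑ ω : Fin N → 𝒳, E.indicator (iidWeight d) ω

/-- Number of occurrences of `x` in the sample `ω`. -/
def iidCount {𝒳 : Type} [DecidableEq 𝒳] {N : ℕ} (ω : Fin N → 𝒳) (x : 𝒳) : ℕ :=
  (Finset.univ.filter fun i => ω i = x).card

/-- Transition kernel of the hard instance `ℳ𝒢_θ`. -/
def hardP {S A B : ℕ} (θ : Fin A → ℝ) : Fin S → Fin A → Fin B → Fin S → ℝ :=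
  fun s a b s' =>
    if s.val = 0 ∧ b.val = 0 then
      θ a * (if s'.val = 0 then 1 else 0) + (1 - θ a) * (if s'.val = 1 then 1 else 0)
    else if s' = s then 1 else 0

/-- Reward of the hard instance: `r(s,a,b) = 1{s = 0}`. -/
def hardR {S A B : ℕ} : Fin S → Fin A → Fin B → ℝ := fun s _ _ => if s.val = 0 then 1 else 0

end ZSMG



section AuxMono

open ZSMG

variable {𝒮 𝒜 ℬ : Type} [Fintype 𝒮] [Fintype 𝒜] [Fintype ℬ]

lemma aux_pay_mono {M M' : 𝒜 → ℬ → ℝ} {w : 𝒜 → ℝ} {z : ℬ → ℝ}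
    (hw : w ∈ stdSimplex ℝ 𝒜) (hz : z ∈ stdSimplex ℝ ℬ)
    (h : ∀ a b, M a b ≤ M' a b) : pay M w z ≤ pay M' w z := by
  refine Finset.sum_le_sum fun a _ => Finset.sum_le_sum fun b _ => ?_
  exact mul_le_mul_of_nonneg_left (h a b) (mul_nonneg (hw.1 a) (hz.1 b))

lemma aux_pay_sum {w : 𝒜 → ℝ} {z : ℬ → ℝ} (hw : w ∈ stdSimplex ℝ 𝒜)
    (hz : z ∈ stdSimplex ℝ ℬ) (K : ℝ) : ∑ a, ∑ b, w a * z b * K = K := by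
  have h1 : ∀ a, ∑ b, w a * z b * K = w a * K := by
    intro a
    calc ∑ b, w a * z b * K = (∑ b, z b) * (w a * K) := by
          rw [Finset.sum_mul]; exact Finset.sum_congr rfl fun b _ => by ring
      _ = w a * K := by rw [hz.2, one_mul]
  calc ∑ a, ∑ b, w a * z b * K = ∑ a, w a * K := Finset.sum_congr rfl fun a _ => h1 a
    _ = (∑ a, w a) * K := by rw [Finset.sum_mul]
    _ = K := by rw [hw.2, one_mul]

lemma aux_pay_nonneg {M : 𝒜 → ℬ → ℝ} {w : 𝒜 → ℝ} {z : ℬ → ℝ}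
    (hw : w ∈ stdSimplex ℝ 𝒜) (hz : z ∈ stdSimplex ℝ ℬ)
    (h : ∀ a b, 0 ≤ M a b) : 0 ≤ pay M w z := by
  calc (0 : ℝ) = pay (fun _ _ => (0 : ℝ)) w z := (aux_pay_sum hw hz 0).symm
    _ ≤ pay M w z := aux_pay_mono hw hz h

lemma aux_pay_le {M : 𝒜 → ℬ → ℝ} {w : 𝒜 → ℝ} {z : ℬ → ℝ} {K : ℝ}
    (hw : w ∈ stdSimplex ℝ 𝒜) (hz : z ∈ stdSimplex ℝ ℬ)
    (h : ∀ a b, M a b ≤ K) : pay M w z ≤ K := by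
  calc pay M w z ≤ pay (fun _ _ => K) w z := aux_pay_mono hw hz h
    _ = K := aux_pay_sum hw hz K

variable [Nonempty 𝒜] [Nonempty ℬ]

instance : Nonempty (stdSimplex ℝ 𝒜) :=
  ⟨⟨_, ite_eq_mem_stdSimplex ℝ (Classical.arbitrary 𝒜)⟩⟩

instance : Nonempty (stdSimplex ℝ ℬ) :=
  ⟨⟨_, ite_eq_mem_stdSimplex ℝ (Classical.arbitrary ℬ)⟩⟩

lemma aux_bddBelow {Q : 𝒮 → 𝒜 → ℬ → ℝ} {K : ℝ}
    (hQ : ∀ s a b, Q s a b ∈ Set.Icc (0 : ℝ) K) (s : 𝒮) (w : stdSimplex ℝ 𝒜) :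
    BddBelow (Set.range fun z : stdSimplex ℝ ℬ => pay (Q s) w.1 z.1) := by
  refine ⟨0, ?_⟩
  rintro y ⟨z, rfl⟩
  exact aux_pay_nonneg w.2 z.2 fun a b => (hQ s a b).1

lemma aux_g_le {Q : 𝒮 → 𝒜 → ℬ → ℝ} {K : ℝ}
    (hQ : ∀ s a b, Q s a b ∈ Set.Icc (0 : ℝ) K) (s : 𝒮) (w : stdSimplex ℝ 𝒜) :
    (⨅ z : stdSimplex ℝ ℬ, pay (Q s) w.1 z.1) ≤ K :=
  ciInf_le_of_le (aux_bddBelow hQ s w) (Classical.arbitrary _)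
    (aux_pay_le w.2 (Classical.arbitrary (stdSimplex ℝ ℬ)).2 fun a b => (hQ s a b).2)

lemma aux_bddAbove {Q : 𝒮 → 𝒜 → ℬ → ℝ} {K : ℝ}
    (hQ : ∀ s a b, Q s a b ∈ Set.Icc (0 : ℝ) K) (s : 𝒮) :
    BddAbove (Set.range fun w : stdSimplex ℝ 𝒜 =>
      ⨅ z : stdSimplex ℝ ℬ, pay (Q s) w.1 z.1) := by
  refine ⟨K, ?_⟩
  rintro y ⟨w, rfl⟩
  exact aux_g_le hQ s w

lemma aux_valQ_nonneg {Q : 𝒮 → 𝒜 → ℬ → ℝ} {K : ℝ}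
    (hQ : ∀ s a b, Q s a b ∈ Set.Icc (0 : ℝ) K) (s : 𝒮) : 0 ≤ valQ Q s := by
  refine le_ciSup_of_le (aux_bddAbove hQ s) (Classical.arbitrary _) ?_
  exact le_ciInf fun z => aux_pay_nonneg (Classical.arbitrary (stdSimplex ℝ 𝒜)).2 z.2
    fun a b => (hQ s a b).1

lemma aux_valQ_le {Q : 𝒮 → 𝒜 → ℬ → ℝ} {K : ℝ}
    (hQ : ∀ s a b, Q s a b ∈ Set.Icc (0 : ℝ) K) (s : 𝒮) : valQ Q s ≤ K :=
  ciSup_le fun w => aux_g_le hQ s w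

lemma aux_valQ_mono {Q₁ Q₂ : 𝒮 → 𝒜 → ℬ → ℝ} {K : ℝ}
    (hQ₁ : ∀ s a b, Q₁ s a b ∈ Set.Icc (0 : ℝ) K)
    (hQ₂ : ∀ s a b, Q₂ s a b ∈ Set.Icc (0 : ℝ) K)
    (hle : ∀ s a b, Q₂ s a b ≤ Q₁ s a b) (s : 𝒮) : valQ Q₂ s ≤ valQ Q₁ s := by
  refine ciSup_mono (aux_bddAbove hQ₁ s) fun w => ?_
  refine ciInf_mono (aux_bddBelow hQ₂ s w) fun z => ?_
  exact aux_pay_mono w.2 z.2 fun a b => hle s a b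

lemma aux_Pexp_mono {p V W : 𝒮 → ℝ} (hp : p ∈ stdSimplex ℝ 𝒮)
    (h : ∀ s, V s ≤ W s) : Pexp p V ≤ Pexp p W :=
  Finset.sum_le_sum fun s _ => mul_le_mul_of_nonneg_left (h s) (hp.1 s)

lemma aux_Pexp_const {p : 𝒮 → ℝ} (hp : p ∈ stdSimplex ℝ 𝒮) (K : ℝ) :
    Pexp p (fun _ => K) = K := by
  rw [Pexp, ← Finset.sum_mul, hp.2, one_mul]

lemma aux_Pexp_nonneg {p V : 𝒮 → ℝ} (hp : p ∈ stdSimplex ℝ 𝒮)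
    (h : ∀ s, 0 ≤ V s) : 0 ≤ Pexp p V := by
  have := aux_Pexp_mono hp (V := fun _ => (0:ℝ)) h
  rwa [aux_Pexp_const hp 0] at this

lemma aux_Pexp_le {p V : 𝒮 → ℝ} {K : ℝ} (hp : p ∈ stdSimplex ℝ 𝒮)
    (h : ∀ s, V s ≤ K) : Pexp p V ≤ K := by
  have := aux_Pexp_mono hp (W := fun _ => K) h
  rwa [aux_Pexp_const hp K] at this

lemma aux_varP_nonneg {p V : 𝒮 → ℝ} (hp : p ∈ stdSimplex ℝ 𝒮) :
    0 ≤ varP p V := by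
  have h1 : ∀ m : ℝ, ∑ s, p s * (V s - m) ^ 2
      = (∑ s, p s * (V s * V s)) - 2 * m * (∑ s, p s * V s) + m ^ 2 * ∑ s, p s := by
    intro m
    rw [Finset.mul_sum, Finset.mul_sum, ← Finset.sum_sub_distrib, ← Finset.sum_add_distrib]
    exact Finset.sum_congr rfl fun s _ => by ring
  have key : varP p V = ∑ s, p s * (V s - Pexp p V) ^ 2 := by
    rw [h1 (Pexp p V), hp.2, varP, Pexp, Pexp]
    ring
  rw [key]
  exact Finset.sum_nonneg fun s _ => mul_nonneg (hp.1 s) (sq_nonneg _)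

lemma aux_varP_diff {p V₁ V₂ : 𝒮 → ℝ} {K : ℝ} (hp : p ∈ stdSimplex ℝ 𝒮)
    (h0 : ∀ s, 0 ≤ V₂ s) (hle : ∀ s, V₂ s ≤ V₁ s) (hK : ∀ s, V₁ s ≤ K) :
    varP p V₁ - varP p V₂ ≤ 2 * K * (Pexp p V₁ - Pexp p V₂) ∧
      varP p V₂ - varP p V₁ ≤ 2 * K * (Pexp p V₁ - Pexp p V₂) := by
  have hm2 : 0 ≤ Pexp p V₂ := aux_Pexp_nonneg hp h0
  have hm12 : Pexp p V₂ ≤ Pexp p V₁ := aux_Pexp_mono hp hle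
  have hm1 : Pexp p V₁ ≤ K := aux_Pexp_le hp hK
  have hsqle : Pexp p (fun s => V₂ s * V₂ s) ≤ Pexp p (fun s => V₁ s * V₁ s) :=
    aux_Pexp_mono hp fun s => mul_le_mul (hle s) (hle s) (h0 s)
      ((h0 s).trans (hle s))
  have hsqd : Pexp p (fun s => V₁ s * V₁ s) - Pexp p (fun s => V₂ s * V₂ s)
      ≤ 2 * K * (Pexp p V₁ - Pexp p V₂) := by
    have hpt : ∀ s, p s * (V₁ s * V₁ s) - p s * (V₂ s * V₂ s)
        ≤ 2 * K * (p s * V₁ s - p s * V₂ s) := by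
      intro s
      have h1 : 0 ≤ p s * (V₁ s - V₂ s) := mul_nonneg (hp.1 s) (sub_nonneg.2 (hle s))
      have h2 : V₁ s + V₂ s ≤ 2 * K := by have := hK s; have := hle s; linarith
      nlinarith
    have hsum := Finset.sum_le_sum fun s (_ : s ∈ Finset.univ) => hpt s
    have hA : Pexp p (fun s => V₁ s * V₁ s) - Pexp p (fun s => V₂ s * V₂ s)
        = ∑ s, (p s * (V₁ s * V₁ s) - p s * (V₂ s * V₂ s)) := by
      simp only [Pexp]
      rw [← Finset.sum_sub_distrib]
    have hB : 2 * K * (Pexp p V₁ - Pexp p V₂)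
        = ∑ s, 2 * K * (p s * V₁ s - p s * V₂ s) := by
      simp only [Pexp]
      rw [← Finset.sum_sub_distrib, Finset.mul_sum]
    rw [hA, hB]
    exact hsum
  constructor
  · rw [varP, varP]
    nlinarith [sq_nonneg (Pexp p V₁ - Pexp p V₂), sq_nonneg (Pexp p V₁ + Pexp p V₂)]
  · rw [varP, varP]
    nlinarith

lemma aux_core_max {c nr e γ v₁ v₂ : ℝ} (hc : 0 < c) (hnr : 1 ≤ nr) (he : 0 ≤ e)
    (hγl : 1 / 2 ≤ γ) (hγu : γ < 1) (hv₁ : 0 ≤ v₁) (hv₂ : 0 ≤ v₂)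
    (hd : v₁ ≤ v₂ + 2 * (1 / (1 - γ)) * e) :
    max (Real.sqrt (c * v₁ / nr)) (2 * c / ((1 - γ) * nr))
      ≤ max (Real.sqrt (c * v₂ / nr)) (2 * c / ((1 - γ) * nr)) + γ * e := by
  have hg : 0 < 1 - γ := by linarith
  have hnr0 : 0 < nr := lt_of_lt_of_le one_pos hnr
  set t := 2 * c / ((1 - γ) * nr) with htdef
  have ht : 0 < t := by positivity
  set s₂ := Real.sqrt (c * v₂ / nr) with hs₂def
  set M := max s₂ t with hMdef
  have hMt : t ≤ M := le_max_right _ _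
  have hMpos : 0 < M := lt_of_lt_of_le ht hMt
  have hγe : 0 ≤ γ * e := mul_nonneg (by linarith) he
  have hs₂sq : s₂ ^ 2 = c * v₂ / nr := Real.sq_sqrt (by positivity)
  have hMsq : c * v₂ / nr ≤ M ^ 2 := by
    rw [← hs₂sq]
    exact pow_le_pow_left₀ (Real.sqrt_nonneg _) (le_max_left _ _) 2
  have h1 : c * v₁ / nr ≤ c * v₂ / nr + t * e := by
    have hnum : c * v₁ ≤ c * v₂ + c * (2 * (1 / (1 - γ)) * e) := by nlinarith
    have hdiv : c * v₁ / nr ≤ (c * v₂ + c * (2 * (1 / (1 - γ)) * e)) / nr := by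
      gcongr
    have heq : (c * v₂ + c * (2 * (1 / (1 - γ)) * e)) / nr = c * v₂ / nr + t * e := by
      rw [htdef]; field_simp
    linarith
  clear_value t s₂ M
  have hkey : c * v₁ / nr ≤ (M + γ * e) ^ 2 := by
    have h2 : t * e ≤ M * e := mul_le_mul_of_nonneg_right hMt he
    have h3 : 0 ≤ M * e := mul_nonneg hMpos.le he
    nlinarith [sq_nonneg (γ * e)]
  have hs₁ : Real.sqrt (c * v₁ / nr) ≤ M + γ * e := by
    calc Real.sqrt (c * v₁ / nr) ≤ Real.sqrt ((M + γ * e) ^ 2) := Real.sqrt_le_sqrt hkey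
      _ = M + γ * e := Real.sqrt_sq (by linarith)
  exact max_le hs₁ (by linarith)

lemma aux_penalty_diff {γ δ Cb : ℝ} {N : ℕ} {m : ℕ} {p V₁ V₂ : 𝒮 → ℝ}
    (hγl : 1 / 2 ≤ γ) (hγu : γ < 1) (hδ : δ ∈ Set.Ioo (0 : ℝ) 1) (hCb : 1 ≤ Cb)
    (hN : 1 ≤ N) (hp : p ∈ stdSimplex ℝ 𝒮)
    (h0 : ∀ s, 0 ≤ V₂ s) (hle : ∀ s, V₂ s ≤ V₁ s) (hK : ∀ s, V₁ s ≤ 1 / (1 - γ)) :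
    penalty γ δ Cb N m p V₁ ≤ penalty γ δ Cb N m p V₂ + γ * (Pexp p V₁ - Pexp p V₂) ∧
      penalty γ δ Cb N m p V₂ ≤ penalty γ δ Cb N m p V₁ + γ * (Pexp p V₁ - Pexp p V₂) := by
  have hg : 0 < 1 - γ := by linarith
  set e := Pexp p V₁ - Pexp p V₂ with he
  have he0 : 0 ≤ e := sub_nonneg.2 (aux_Pexp_mono hp hle)
  have hγe : 0 ≤ γ * e := mul_nonneg (by linarith) he0
  clear_value e
  by_cases hm : m = 0
  · constructor <;> · rw [penalty, penalty, if_pos hm, if_pos hm]; linarith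
  · have hnr : (1 : ℝ) ≤ (m : ℝ) := by exact_mod_cast Nat.one_le_iff_ne_zero.2 hm
    have hc : 0 < Cb * Real.log ((N : ℝ) / ((1 - γ) * δ)) := by
      have hNd : (1 : ℝ) ≤ (N : ℝ) := by exact_mod_cast hN
      have hden : 0 < (1 - γ) * δ := mul_pos hg hδ.1
      have harg : 1 < (N : ℝ) / ((1 - γ) * δ) := by
        rw [lt_div_iff₀ hden]
        nlinarith [hδ.2, hδ.1]
      exact mul_pos (by linarith) (Real.log_pos harg)
    set c := Cb * Real.log ((N : ℝ) / ((1 - γ) * δ)) with hcdef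
    have h2c : 2 * Cb * Real.log ((N : ℝ) / ((1 - γ) * δ)) / ((1 - γ) * (m : ℝ))
        = 2 * c / ((1 - γ) * (m : ℝ)) := by rw [hcdef]; ring
    have hvd := aux_varP_diff (K := 1 / (1 - γ)) hp h0 hle hK
    have hcore₁ := aux_core_max (c := c) (nr := (m : ℝ)) (e := e) (γ := γ)
      (v₁ := varP p V₁) (v₂ := varP p V₂) hc hnr he0 hγl hγu
      (aux_varP_nonneg hp) (aux_varP_nonneg hp) (by rw [he]; linarith [hvd.1])
    have hcore₂ := aux_core_max (c := c) (nr := (m : ℝ)) (e := e) (γ := γ)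
      (v₁ := varP p V₂) (v₂ := varP p V₁) hc hnr he0 hγl hγu
      (aux_varP_nonneg hp) (aux_varP_nonneg hp) (by rw [he]; linarith [hvd.2])
    have hmin : ∀ x y : ℝ, x ≤ y + γ * e →
        min x (1 / (1 - γ)) ≤ min y (1 / (1 - γ)) + γ * e := by
      intro x y h
      calc min x (1 / (1 - γ)) ≤ min (y + γ * e) (1 / (1 - γ)) := min_le_min h le_rfl
        _ ≤ min (y + γ * e) (1 / (1 - γ) + γ * e) := min_le_min le_rfl (by linarith)
        _ = min y (1 / (1 - γ)) + γ * e := min_add_add_right _ _ _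
    constructor
    · rw [penalty, penalty, if_neg hm, if_neg hm, h2c]
      have := hmin _ _ hcore₁
      linarith
    · rw [penalty, penalty, if_neg hm, if_neg hm, h2c]
      have := hmin _ _ hcore₂
      linarith

end AuxMono

open ZSMG in
/-- monotonicity of the pessimistic Bellman operators. -/
theorem statement3 {𝒮 𝒜 ℬ : Type} [Fintype 𝒮] [Fintype 𝒜] [Fintype ℬ]
    [Nonempty 𝒮] [Nonempty 𝒜] [Nonempty ℬ]
    (γ δ Cb : ℝ) (hγl : 1 / 2 ≤ γ) (hγu : γ < 1) (hδ : δ ∈ Set.Ioo (0 : ℝ) 1)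
    (hCb : 1 ≤ Cb) (N : ℕ) (hN : 1 ≤ N)
    (n : 𝒮 → 𝒜 → ℬ → ℕ) (Ph : 𝒮 → 𝒜 → ℬ → 𝒮 → ℝ) (hPh : IsKernel Ph)
    (rh : 𝒮 → 𝒜 → ℬ → ℝ) (hrh : IsReward rh)
    (Q₁ Q₂ : 𝒮 → 𝒜 → ℬ → ℝ)
    (hQ₁ : ∀ s a b, Q₁ s a b ∈ Set.Icc (0 : ℝ) (1 / (1 - γ)))
    (hQ₂ : ∀ s a b, Q₂ s a b ∈ Set.Icc (0 : ℝ) (1 / (1 - γ)))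
    (hle : ∀ s a b, Q₂ s a b ≤ Q₁ s a b) :
    (∀ s a b, TpeMinus γ δ Cb N n Ph rh Q₂ s a b ≤ TpeMinus γ δ Cb N n Ph rh Q₁ s a b) ∧
    (∀ s a b, TpePlus γ δ Cb N n Ph rh Q₂ s a b ≤ TpePlus γ δ Cb N n Ph rh Q₁ s a b) := by
  have hg : 0 < 1 - γ := by linarith
  have hK0 : (0 : ℝ) ≤ 1 / (1 - γ) := by positivity
  set V₁ := valQ Q₁ with hV₁
  set V₂ := valQ Q₂ with hV₂
  have hV₂0 : ∀ s, 0 ≤ V₂ s := fun s => aux_valQ_nonneg hQ₂ s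
  have hV₁K : ∀ s, V₁ s ≤ 1 / (1 - γ) := fun s => aux_valQ_le hQ₁ s
  have hVle : ∀ s, V₂ s ≤ V₁ s := fun s => aux_valQ_mono hQ₁ hQ₂ hle s
  clear_value V₁ V₂
  constructor
  · intro s a b
    have hpen := (aux_penalty_diff (m := n s a b) (p := Ph s a b) (V₁ := V₁) (V₂ := V₂)
      hγl hγu hδ hCb hN (hPh s a b) hV₂0 hVle hV₁K).1
    have hP : Pexp (Ph s a b) V₂ ≤ Pexp (Ph s a b) V₁ := aux_Pexp_mono (hPh s a b) hVle
    refine max_le_max ?_ le_rfl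
    have hγ0 : (0 : ℝ) ≤ γ := by linarith
    rw [← hV₁, ← hV₂]
    nlinarith
  · intro s a b
    have hpen := (aux_penalty_diff (m := n s a b) (p := Ph s a b) (V₁ := V₁) (V₂ := V₂)
      hγl hγu hδ hCb hN (hPh s a b) hV₂0 hVle hV₁K).2
    have hP : Pexp (Ph s a b) V₂ ≤ Pexp (Ph s a b) V₁ := aux_Pexp_mono (hPh s a b) hVle
    refine min_le_min ?_ le_rfl
    have hγ0 : (0 : ℝ) ≤ γ := by linarith
    rw [← hV₁, ← hV₂]
    nlinarith
end
end

section
/- Let γ ∈ [1/2,1). For any Q₁, Q₂ : 𝒮×𝒜×ℬ → [0, 1/(1−γ)], the pessimistic Bellman operators are γ-contractions in the sup norm: ‖T̂⁻(Q₁) − T̂⁻(Q₂)‖_∞ ≤ γ‖Q₁ − Q₂‖_∞ and ‖T̂⁺(Q₁) − T̂⁺(Q₂)‖_∞ ≤ γ‖Q₁ − Q₂‖_∞. -/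
open scoped BigOperators ENNReal Classical

noncomputable section

namespace ZSMGAux

open ZSMG

variable {𝒮 𝒜 ℬ : Type} [Fintype 𝒮] [Fintype 𝒜] [Fintype ℬ]

/-- the standard simplex over a nonempty fintype is nonempty. -/
lemma simplex_nonempty {ι : Type} [Fintype ι] [Nonempty ι] :
    Nonempty (stdSimplex ℝ ι) := by
  obtain ⟨i₀⟩ := (inferInstance : Nonempty ι)
  classical
  refine ⟨⟨fun i => if i = i₀ then 1 else 0, ?_, ?_⟩⟩
  · intro i; dsimp only; split <;> norm_num
  · simp

lemma Pexp_nonneg {p V : 𝒮 → ℝ} (hp : ∀ s, 0 ≤ p s) (hV : ∀ s, 0 ≤ V s) :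
    0 ≤ Pexp p V :=
  Finset.sum_nonneg fun s _ => mul_nonneg (hp s) (hV s)

lemma varP_nonneg {p : 𝒮 → ℝ} (hp : p ∈ stdSimplex ℝ 𝒮) (V : 𝒮 → ℝ) :
    0 ≤ varP p V := by
  have key := Finset.sum_mul_sq_le_sq_mul_sq Finset.univ
    (fun s => Real.sqrt (p s)) (fun s => Real.sqrt (p s) * V s)
  have h1 : ∀ s : 𝒮, Real.sqrt (p s) * (Real.sqrt (p s) * V s) = p s * V s := by
    intro s
    rw [← mul_assoc, Real.mul_self_sqrt (hp.1 s)]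
  have h2 : ∀ s : 𝒮, Real.sqrt (p s) ^ 2 = p s := fun s => Real.sq_sqrt (hp.1 s)
  have h3 : ∀ s : 𝒮, (Real.sqrt (p s) * V s) ^ 2 = p s * (V s * V s) := by
    intro s
    rw [mul_pow, Real.sq_sqrt (hp.1 s)]; ring
  simp only [h1, h2, h3] at key
  have hsum : ∑ s : 𝒮, p s = 1 := hp.2
  rw [hsum, one_mul] at key
  have : (Pexp p V) ^ 2 ≤ Pexp p (fun s => V s * V s) := key
  unfold varP
  linarith

/-- Key algebraic identity for the variance of a shifted difference. -/
lemma varP_shift (p : 𝒮 → ℝ) (hp : ∑ s : 𝒮, p s = 1) (X e : 𝒮 → ℝ) (C : ℝ) :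
    varP p (fun s => X s + C - e s)
      = varP p X + varP p e
        - 2 * (Pexp p (fun s => X s * e s) - Pexp p X * Pexp p e) := by
  unfold varP Pexp
  have h1 : ∑ s : 𝒮, p s * ((X s + C - e s) * (X s + C - e s))
      = ∑ s : 𝒮, (p s * (X s * X s) + p s * (e s * e s) - 2 * (p s * (X s * e s))
          + 2 * C * (p s * X s) - 2 * C * (p s * e s) + C * C * p s) := by
    apply Finset.sum_congr rfl; intro s _; ring
  have h2 : ∑ s : 𝒮, p s * (X s + C - e s)
      = ∑ s : 𝒮, (p s * X s + C * p s - p s * e s) := by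
    apply Finset.sum_congr rfl; intro s _; ring
  rw [h1, h2]
  simp only [Finset.sum_add_distrib, Finset.sum_sub_distrib, ← Finset.mul_sum, hp]
  ring

lemma varP_const_sub (p : 𝒮 → ℝ) (hp : ∑ s : 𝒮, p s = 1) (V : 𝒮 → ℝ) (K : ℝ) :
    varP p (fun s => K - V s) = varP p V := by
  have h : (fun s : 𝒮 => K - V s) = fun s : 𝒮 => (fun _ : 𝒮 => (0:ℝ)) s + K - V s := by
    funext s; ring
  rw [h, varP_shift p hp _ _ K]
  have h0 : Pexp p (fun _ : 𝒮 => (0:ℝ)) = 0 := by simp [Pexp]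
  have h0' : Pexp p (fun s : 𝒮 => (0:ℝ) * V s) = 0 := by simp [Pexp]
  have h0'' : varP p (fun _ : 𝒮 => (0:ℝ)) = 0 := by simp [varP, Pexp]
  rw [h0'', h0', h0]
  ring

lemma penalty_congr (γ δ Cb : ℝ) (N n : ℕ) (p V V' : 𝒮 → ℝ)
    (h : varP p V = varP p V') :
    penalty γ δ Cb N n p V = penalty γ δ Cb N n p V' := by
  unfold penalty; rw [h]

/-- Core numeric inequality. -/
lemma core_quad (u σA σB K : ℝ) (hu : 0 ≤ u) (hA : 0 ≤ σA) (hAB : σA ≤ σB)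
    (hK : 0 < K) :
    u * σB - max (u * σA) (2 * (u * u) * K) ≤ (σB ^ 2 - σA ^ 2) / (4 * K) := by
  rcases le_total (2 * u * K) σA with h | h
  · have h1 : u * σA ≤ max (u * σA) (2 * (u * u) * K) := le_max_left _ _
    have key : u * σB - u * σA ≤ (σB ^ 2 - σA ^ 2) / (4 * K) := by
      rw [le_div_iff₀ (by positivity)]
      nlinarith [mul_nonneg hu (sub_nonneg.mpr hAB), sub_nonneg.mpr hAB,
        mul_nonneg (sub_nonneg.mpr hAB) (sub_nonneg.mpr h)]
    linarith
  · have h1 : 2 * (u * u) * K ≤ max (u * σA) (2 * (u * u) * K) := le_max_right _ _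
    have key : u * σB - 2 * (u * u) * K ≤ (σB ^ 2 - σA ^ 2) / (4 * K) := by
      rw [le_div_iff₀ (by positivity)]
      nlinarith [sq_nonneg (σB - 2 * u * K), mul_nonneg hA hA]
    linarith

lemma min_sub_min {x y K : ℝ} (h : y ≤ x) : min x K - min y K ≤ x - y := by
  rcases le_total x K with h1 | h1 <;> rcases le_total y K with h2 | h2 <;>
    simp [min_eq_left, min_eq_right, h1, h2] <;> linarith

set_option maxHeartbeats 1000000 in
/-- MASTER lemma: one-sided Lipschitz bound for the penalty. -/
lemma pen_diff (γ δ Cb : ℝ) (hγl : 1 / 2 ≤ γ) (hγu : γ < 1)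
    (hδ : δ ∈ Set.Ioo (0 : ℝ) 1) (hCb : 1 ≤ Cb) (N : ℕ) (hN : 1 ≤ N) (n : ℕ)
    (p : 𝒮 → ℝ) (hp : p ∈ stdSimplex ℝ 𝒮)
    (A B : 𝒮 → ℝ)
    (hA : ∀ s, 0 ≤ A s ∧ A s ≤ 1 / (1 - γ))
    (hB : ∀ s, 0 ≤ B s ∧ B s ≤ 1 / (1 - γ))
    (C : ℝ) (hd : ∀ s, |B s - A s| ≤ C) :
    penalty γ δ Cb N n p B - penalty γ δ Cb N n p A
      ≤ γ * (C - (Pexp p B - Pexp p A)) := by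
  have h1γ : 0 < 1 - γ := by linarith
  set K : ℝ := 1 / (1 - γ) with hKdef
  have hK : 0 < K := by positivity
  have hγ0 : 0 < γ := by linarith
  -- the slack function e
  set e : 𝒮 → ℝ := fun s => C - (B s - A s) with hedef
  have he0 : ∀ s, 0 ≤ e s := fun s => by
    have := (abs_le.mp (hd s)).2; simp only [hedef]; linarith
  have hPe0 : 0 ≤ Pexp p e := Pexp_nonneg hp.1 he0
  have heq : Pexp p e = C - (Pexp p B - Pexp p A) := by
    unfold Pexp
    have : ∑ s : 𝒮, p s * e s = ∑ s : 𝒮, (C * p s - (p s * B s - p s * A s)) := by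
      apply Finset.sum_congr rfl; intro s _; simp only [hedef]; ring
    rw [this]
    simp only [Finset.sum_sub_distrib, ← Finset.mul_sum, hp.2]
    ring
  rw [← heq]
  -- variance difference bound
  have hVar : varP p B - varP p A ≤ 2 * K * Pexp p e := by
    set X : 𝒮 → ℝ := fun s => K - B s with hXdef
    have hXe : (fun s : 𝒮 => K - A s) = fun s => X s + C - e s := by
      funext s; simp only [hXdef, hedef]; ring
    have hvB : varP p B = varP p X := (varP_const_sub p hp.2 B K).symm
    have hvA : varP p A = varP p X + varP p e
        - 2 * (Pexp p (fun s => X s * e s) - Pexp p X * Pexp p e) := by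
      rw [← varP_const_sub p hp.2 A K, hXe, varP_shift p hp.2 X e C]
    have hX0 : ∀ s, 0 ≤ X s := fun s => by
      have := (hB s).2; simp only [hXdef]; linarith
    have hXK : ∀ s, X s ≤ K := fun s => by
      have := (hB s).1; simp only [hXdef]; linarith
    have hcov : Pexp p (fun s => X s * e s) ≤ K * Pexp p e := by
      unfold Pexp
      rw [Finset.mul_sum]
      apply Finset.sum_le_sum
      intro s _
      have : X s * e s ≤ K * e s := mul_le_mul_of_nonneg_right (hXK s) (he0 s)
      calc p s * (X s * e s) ≤ p s * (K * e s) :=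
            mul_le_mul_of_nonneg_left this (hp.1 s)
        _ = K * (p s * e s) := by ring
    have hPX0 : 0 ≤ Pexp p X := Pexp_nonneg hp.1 hX0
    have hve : 0 ≤ varP p e := varP_nonneg hp e
    have hmul : 0 ≤ Pexp p X * Pexp p e := mul_nonneg hPX0 hPe0
    rw [hvB, hvA]
    nlinarith
  -- now the penalty analysis
  unfold penalty
  by_cases hn : n = 0
  · simp only [hn, eq_self_iff_true, if_true]
    have : (0:ℝ) ≤ γ * Pexp p e := mul_nonneg hγ0.le hPe0
    linarith
  · simp only [if_neg hn]
    have hn1 : (1:ℝ) ≤ (n:ℝ) := by exact_mod_cast Nat.one_le_iff_ne_zero.mpr hn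
    have hnpos : (0:ℝ) < (n:ℝ) := by linarith
    -- positivity of the log constant
    have hlogpos : 0 < Real.log ((N:ℝ) / ((1 - γ) * δ)) := by
      apply Real.log_pos
      rw [lt_div_iff₀ (mul_pos h1γ hδ.1)]
      have hδ1 : δ < 1 := hδ.2
      have hN1 : (1:ℝ) ≤ (N:ℝ) := by exact_mod_cast hN
      nlinarith
    set c : ℝ := Cb * Real.log ((N:ℝ) / ((1 - γ) * δ)) with hcdef
    have hc : 0 < c := mul_pos (by linarith) hlogpos
    set u : ℝ := Real.sqrt (c / n) with hudef
    have hu0 : 0 ≤ u := Real.sqrt_nonneg _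
    have huu : u * u = c / n := Real.mul_self_sqrt (by positivity)
    set σA : ℝ := Real.sqrt (varP p A) with hsAdef
    set σB : ℝ := Real.sqrt (varP p B) with hsBdef
    have hsA0 : 0 ≤ σA := Real.sqrt_nonneg _
    have hvA0 : 0 ≤ varP p A := varP_nonneg hp A
    have hvB0 : 0 ≤ varP p B := varP_nonneg hp B
    have hsqB : Real.sqrt (c * varP p B / (n:ℝ)) = u * σB := by
      rw [hudef, hsBdef, ← Real.sqrt_mul (by positivity)]
      congr 1; field_simp
    have hsqA : Real.sqrt (c * varP p A / (n:ℝ)) = u * σA := by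
      rw [hudef, hsAdef, ← Real.sqrt_mul (by positivity)]
      congr 1; field_simp
    have hL : 2 * c / ((1 - γ) * (n:ℝ)) = 2 * (u * u) * K := by
      rw [huu, hKdef]; field_simp
    have hLrw : 2 * Cb * Real.log ((N:ℝ) / ((1 - γ) * δ)) / ((1 - γ) * (n:ℝ))
        = 2 * (u * u) * K := by
      rw [← hL, hcdef]; ring_nf
    have hrw : ∀ V : 𝒮 → ℝ,
        Cb * Real.log ((N:ℝ) / ((1 - γ) * δ)) * varP p V / (n:ℝ)
          = c * varP p V / (n:ℝ) := by intro V; rw [hcdef]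
    rw [hrw A, hrw B, hsqA, hsqB, hLrw]
    rcases le_total (varP p B) (varP p A) with hv | hv
    · -- penalty decreases
      have hσ : σB ≤ σA := Real.sqrt_le_sqrt hv
      have h1 : u * σB ≤ u * σA := mul_le_mul_of_nonneg_left hσ hu0
      have h2 : max (u * σB) (2 * (u * u) * K) ≤ max (u * σA) (2 * (u * u) * K) :=
        max_le_max h1 le_rfl
      have h3 : min (max (u * σB) (2 * (u * u) * K)) (1 / (1 - γ))
          ≤ min (max (u * σA) (2 * (u * u) * K)) (1 / (1 - γ)) :=
        min_le_min h2 le_rfl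
      have : (0:ℝ) ≤ γ * Pexp p e := mul_nonneg hγ0.le hPe0
      linarith
    · -- penalty increases: use the core quadratic bound
      have hσ : σA ≤ σB := Real.sqrt_le_sqrt hv
      have hR0 : 0 ≤ (σB ^ 2 - σA ^ 2) / (4 * K) := by
        apply div_nonneg _ (by positivity)
        nlinarith
      have hcore := core_quad u σA σB K hu0 hsA0 hσ hK
      have hmax : max (u * σB) (2 * (u * u) * K)
          ≤ max (u * σA) (2 * (u * u) * K) + (σB ^ 2 - σA ^ 2) / (4 * K) := by
        apply max_le
        · linarith
        · have := le_max_right (u * σA) (2 * (u * u) * K); linarith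
      have hmono : max (u * σA) (2 * (u * u) * K) ≤ max (u * σB) (2 * (u * u) * K) :=
        max_le_max (mul_le_mul_of_nonneg_left hσ hu0) le_rfl
      have hmin : min (max (u * σB) (2 * (u * u) * K)) (1 / (1 - γ))
            - min (max (u * σA) (2 * (u * u) * K)) (1 / (1 - γ))
          ≤ (σB ^ 2 - σA ^ 2) / (4 * K) := by
        have := min_sub_min (K := 1 / (1 - γ)) hmono
        linarith
      have hvar' : (σB ^ 2 - σA ^ 2) / (4 * K) ≤ Pexp p e / 2 := by
        rw [div_le_iff₀ (by positivity)]
        have e1 : σB ^ 2 = varP p B := Real.sq_sqrt hvB0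
        have e2 : σA ^ 2 = varP p A := Real.sq_sqrt hvA0
        rw [e1, e2]
        calc varP p B - varP p A ≤ 2 * K * Pexp p e := hVar
          _ = Pexp p e / 2 * (4 * K) := by ring
      have hhalf : Pexp p e / 2 ≤ γ * Pexp p e := by
        have h' : 0 ≤ (γ - 1 / 2) * Pexp p e :=
          mul_nonneg (by linarith) hPe0
        nlinarith
      linarith

lemma Pexp_const_sub (p : 𝒮 → ℝ) (hp : ∑ s : 𝒮, p s = 1) (V : 𝒮 → ℝ) (K : ℝ) :
    Pexp p (fun s => K - V s) = K - Pexp p V := by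
  unfold Pexp
  have h : ∑ s : 𝒮, p s * (K - V s) = ∑ s : 𝒮, (K * p s - p s * V s) := by
    apply Finset.sum_congr rfl; intro s _; ring
  rw [h, Finset.sum_sub_distrib, ← Finset.mul_sum, hp, mul_one]

/-- MASTER lemma, second orientation. -/
lemma pen_diff' (γ δ Cb : ℝ) (hγl : 1 / 2 ≤ γ) (hγu : γ < 1)
    (hδ : δ ∈ Set.Ioo (0 : ℝ) 1) (hCb : 1 ≤ Cb) (N : ℕ) (hN : 1 ≤ N) (n : ℕ)
    (p : 𝒮 → ℝ) (hp : p ∈ stdSimplex ℝ 𝒮)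
    (A B : 𝒮 → ℝ)
    (hA : ∀ s, 0 ≤ A s ∧ A s ≤ 1 / (1 - γ))
    (hB : ∀ s, 0 ≤ B s ∧ B s ≤ 1 / (1 - γ))
    (C : ℝ) (hd : ∀ s, |B s - A s| ≤ C) :
    penalty γ δ Cb N n p B - penalty γ δ Cb N n p A
      ≤ γ * (C + (Pexp p B - Pexp p A)) := by
  have h1γ : 0 < 1 - γ := by linarith
  set K : ℝ := 1 / (1 - γ) with hKdef
  have hA' : ∀ s, 0 ≤ K - A s ∧ K - A s ≤ K := fun s => ⟨by linarith [(hA s).2], by linarith [(hA s).1]⟩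
  have hB' : ∀ s, 0 ≤ K - B s ∧ K - B s ≤ K := fun s => ⟨by linarith [(hB s).2], by linarith [(hB s).1]⟩
  have hd' : ∀ s, |(K - B s) - (K - A s)| ≤ C := fun s => by
    have : (K - B s) - (K - A s) = -(B s - A s) := by ring
    rw [this, abs_neg]; exact hd s
  have key := pen_diff γ δ Cb hγl hγu hδ hCb N hN n p hp
    (fun s => K - A s) (fun s => K - B s) hA' hB' C hd'
  have e1 : penalty γ δ Cb N n p (fun s => K - B s) = penalty γ δ Cb N n p B :=
    penalty_congr γ δ Cb N n p _ _ (varP_const_sub p hp.2 B K)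
  have e2 : penalty γ δ Cb N n p (fun s => K - A s) = penalty γ δ Cb N n p A :=
    penalty_congr γ δ Cb N n p _ _ (varP_const_sub p hp.2 A K)
  have e3 : Pexp p (fun s => K - B s) = K - Pexp p B := Pexp_const_sub p hp.2 B K
  have e4 : Pexp p (fun s => K - A s) = K - Pexp p A := Pexp_const_sub p hp.2 A K
  rw [e1, e2, e3, e4] at key
  have : γ * (C - (K - Pexp p B - (K - Pexp p A))) = γ * (C + (Pexp p B - Pexp p A)) := by
    ring
  linarith [key, this.le, this.ge]

section Pay

variable [Nonempty 𝒜] [Nonempty ℬ]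

lemma pay_mono {M₁ M₂ : 𝒜 → ℬ → ℝ} (h : ∀ a b, M₁ a b ≤ M₂ a b)
    {w : 𝒜 → ℝ} {z : ℬ → ℝ} (hw : ∀ a, 0 ≤ w a) (hz : ∀ b, 0 ≤ z b) :
    pay M₁ w z ≤ pay M₂ w z := by
  apply Finset.sum_le_sum; intro a _
  apply Finset.sum_le_sum; intro b _
  exact mul_le_mul_of_nonneg_left (h a b) (mul_nonneg (hw a) (hz b))

lemma pay_const {w : 𝒜 → ℝ} {z : ℬ → ℝ} (hw : w ∈ stdSimplex ℝ 𝒜)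
    (hz : z ∈ stdSimplex ℝ ℬ) (c : ℝ) :
    pay (fun _ _ => c) w z = c := by
  unfold pay
  have h1 : ∀ a : 𝒜, ∑ b : ℬ, w a * z b * c = w a * c := by
    intro a
    have : ∑ b : ℬ, w a * z b * c = ∑ b : ℬ, w a * c * z b := by
      apply Finset.sum_congr rfl; intro b _; ring
    rw [this, ← Finset.mul_sum, hz.2, mul_one]
  rw [Finset.sum_congr rfl fun a _ => h1 a, ← Finset.sum_mul, hw.2, one_mul]

lemma pay_add {M₁ M₂ : 𝒜 → ℬ → ℝ} {w : 𝒜 → ℝ} {z : ℬ → ℝ} :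
    pay (fun a b => M₁ a b + M₂ a b) w z = pay M₁ w z + pay M₂ w z := by
  unfold pay
  rw [← Finset.sum_add_distrib]
  apply Finset.sum_congr rfl; intro a _
  rw [← Finset.sum_add_distrib]
  apply Finset.sum_congr rfl; intro b _
  ring

lemma pay_le_pay {M₁ M₂ : 𝒜 → ℬ → ℝ} {C : ℝ} (h : ∀ a b, M₁ a b ≤ M₂ a b + C)
    {w : 𝒜 → ℝ} {z : ℬ → ℝ} (hw : w ∈ stdSimplex ℝ 𝒜) (hz : z ∈ stdSimplex ℝ ℬ) :
    pay M₁ w z ≤ pay M₂ w z + C := by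
  have h1 : pay M₁ w z ≤ pay (fun a b => M₂ a b + C) w z := pay_mono h hw.1 hz.1
  have h2 : pay (fun a b => M₂ a b + (fun _ _ => C) a b) w z
      = pay M₂ w z + pay (fun _ _ => C) w z := pay_add
  rw [pay_const hw hz] at h2
  exact h1.trans h2.le

lemma pay_bounds {M : 𝒜 → ℬ → ℝ} {lo hi : ℝ} (h : ∀ a b, lo ≤ M a b ∧ M a b ≤ hi)
    {w : 𝒜 → ℝ} {z : ℬ → ℝ} (hw : w ∈ stdSimplex ℝ 𝒜) (hz : z ∈ stdSimplex ℝ ℬ) :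
    lo ≤ pay M w z ∧ pay M w z ≤ hi := by
  constructor
  · have := pay_mono (M₁ := fun _ _ => lo) (fun a b => (h a b).1) hw.1 hz.1
    rwa [pay_const hw hz] at this
  · have := pay_mono (M₂ := fun _ _ => hi) (fun a b => (h a b).2) hw.1 hz.1
    rwa [pay_const hw hz] at this

lemma valQ_mem {Q : 𝒮 → 𝒜 → ℬ → ℝ} {lo hi : ℝ} (s : 𝒮)
    (h : ∀ a b, lo ≤ Q s a b ∧ Q s a b ≤ hi) :
    lo ≤ valQ Q s ∧ valQ Q s ≤ hi := by
  have hA : Nonempty (stdSimplex ℝ 𝒜) := simplex_nonempty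
  have hB : Nonempty (stdSimplex ℝ ℬ) := simplex_nonempty
  have hlo : ∀ (w : stdSimplex ℝ 𝒜) (z : stdSimplex ℝ ℬ), lo ≤ pay (Q s) w.1 z.1 :=
    fun w z => (pay_bounds h w.2 z.2).1
  have hhi : ∀ (w : stdSimplex ℝ 𝒜) (z : stdSimplex ℝ ℬ), pay (Q s) w.1 z.1 ≤ hi :=
    fun w z => (pay_bounds h w.2 z.2).2
  have hBlo : ∀ w : stdSimplex ℝ 𝒜, lo ≤ ⨅ z : stdSimplex ℝ ℬ, pay (Q s) w.1 z.1 :=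
    fun w => le_ciInf (hlo w)
  have hBhi : ∀ w : stdSimplex ℝ 𝒜, (⨅ z : stdSimplex ℝ ℬ, pay (Q s) w.1 z.1) ≤ hi := by
    intro w
    obtain ⟨z₀⟩ := hB
    exact ciInf_le_of_le ⟨lo, by rintro x ⟨z, rfl⟩; exact hlo w z⟩ z₀ (hhi w z₀)
  constructor
  · obtain ⟨w₀⟩ := hA
    exact le_ciSup_of_le ⟨hi, by rintro x ⟨w, rfl⟩; exact hBhi w⟩ w₀ (hBlo w₀)
  · exact ciSup_le hBhi

lemma valQ_le {Q₁ Q₂ : 𝒮 → 𝒜 → ℬ → ℝ} {lo hi C : ℝ} (s : 𝒮)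
    (h1 : ∀ a b, lo ≤ Q₁ s a b ∧ Q₁ s a b ≤ hi)
    (h2 : ∀ a b, lo ≤ Q₂ s a b ∧ Q₂ s a b ≤ hi)
    (h : ∀ a b, Q₁ s a b ≤ Q₂ s a b + C) :
    valQ Q₁ s ≤ valQ Q₂ s + C := by
  have hA : Nonempty (stdSimplex ℝ 𝒜) := simplex_nonempty
  have hB : Nonempty (stdSimplex ℝ ℬ) := simplex_nonempty
  apply ciSup_le
  intro w
  have hbb : BddBelow (Set.range fun z : stdSimplex ℝ ℬ => pay (Q₁ s) w.1 z.1) :=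
    ⟨lo, by rintro x ⟨z, rfl⟩; exact (pay_bounds h1 w.2 z.2).1⟩
  have step : ∀ z : stdSimplex ℝ ℬ,
      (⨅ z' : stdSimplex ℝ ℬ, pay (Q₁ s) w.1 z'.1) - C ≤ pay (Q₂ s) w.1 z.1 := by
    intro z
    have i1 : (⨅ z' : stdSimplex ℝ ℬ, pay (Q₁ s) w.1 z'.1) ≤ pay (Q₁ s) w.1 z.1 :=
      ciInf_le hbb z
    have i2 : pay (Q₁ s) w.1 z.1 ≤ pay (Q₂ s) w.1 z.1 + C := pay_le_pay h w.2 z.2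
    linarith
  have h3 : (⨅ z' : stdSimplex ℝ ℬ, pay (Q₁ s) w.1 z'.1) - C
      ≤ ⨅ z : stdSimplex ℝ ℬ, pay (Q₂ s) w.1 z.1 := le_ciInf step
  have h4 : (⨅ z : stdSimplex ℝ ℬ, pay (Q₂ s) w.1 z.1) ≤ valQ Q₂ s := by
    apply le_ciSup (f := fun w : stdSimplex ℝ 𝒜 => ⨅ z : stdSimplex ℝ ℬ, pay (Q₂ s) w.1 z.1)
    refine ⟨hi, ?_⟩
    rintro x ⟨w', rfl⟩
    obtain ⟨z₀⟩ := hB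
    exact ciInf_le_of_le ⟨lo, by rintro x ⟨z, rfl⟩; exact (pay_bounds h2 w'.2 z.2).1⟩ z₀
      (pay_bounds h2 w'.2 z₀.2).2
  linarith

lemma valQ_abs_le {Q₁ Q₂ : 𝒮 → 𝒜 → ℬ → ℝ} {lo hi C : ℝ} (s : 𝒮)
    (h1 : ∀ a b, lo ≤ Q₁ s a b ∧ Q₁ s a b ≤ hi)
    (h2 : ∀ a b, lo ≤ Q₂ s a b ∧ Q₂ s a b ≤ hi)
    (h : ∀ a b, |Q₁ s a b - Q₂ s a b| ≤ C) :
    |valQ Q₁ s - valQ Q₂ s| ≤ C := by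
  rw [abs_sub_le_iff]
  constructor
  · have := valQ_le s h1 h2 (fun a b => by linarith [(abs_le.mp (h a b)).2])
    linarith
  · have := valQ_le s h2 h1 (fun a b => by linarith [(abs_le.mp (h a b)).1])
    linarith

end Pay

section Norm

variable [Nonempty 𝒮] [Nonempty 𝒜] [Nonempty ℬ]

lemma abs_le_supNormQ (f : 𝒮 → 𝒜 → ℬ → ℝ) (s : 𝒮) (a : 𝒜) (b : ℬ) :
    |f s a b| ≤ supNormQ f := by
  unfold supNormQ
  calc |f s a b| ≤ ⨆ b', |f s a b'| :=
        le_ciSup (f := fun b' => |f s a b'|) (Set.finite_range _).bddAbove b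
    _ ≤ ⨆ a', ⨆ b', |f s a' b'| :=
        le_ciSup (f := fun a' => ⨆ b', |f s a' b'|) (Set.finite_range _).bddAbove a
    _ ≤ ⨆ s', ⨆ a', ⨆ b', |f s' a' b'| :=
        le_ciSup (f := fun s' => ⨆ a', ⨆ b', |f s' a' b'|) (Set.finite_range _).bddAbove s

lemma supNormQ_le {f : 𝒮 → 𝒜 → ℬ → ℝ} {M : ℝ} (h : ∀ s a b, |f s a b| ≤ M) :
    supNormQ f ≤ M :=
  ciSup_le fun s => ciSup_le fun a => ciSup_le fun b => h s a b

lemma supNormQ_nonneg (f : 𝒮 → 𝒜 → ℬ → ℝ) : 0 ≤ supNormQ f := by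
  obtain ⟨s⟩ := (inferInstance : Nonempty 𝒮)
  obtain ⟨a⟩ := (inferInstance : Nonempty 𝒜)
  obtain ⟨b⟩ := (inferInstance : Nonempty ℬ)
  exact (abs_nonneg _).trans (abs_le_supNormQ f s a b)

end Norm

lemma abs_min_sub_min (a b c : ℝ) : |min a c - min b c| ≤ |a - b| := by
  have := abs_min_sub_min_le_max a c b c
  simpa using this

end ZSMGAux


open ZSMG in
/-- the pessimistic Bellman operators are `γ`-contractions in the
sup norm. -/
theorem statement4 {𝒮 𝒜 ℬ : Type} [Fintype 𝒮] [Fintype 𝒜] [Fintype ℬ]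
    [Nonempty 𝒮] [Nonempty 𝒜] [Nonempty ℬ]
    (γ δ Cb : ℝ) (hγl : 1 / 2 ≤ γ) (hγu : γ < 1) (hδ : δ ∈ Set.Ioo (0 : ℝ) 1)
    (hCb : 1 ≤ Cb) (N : ℕ) (hN : 1 ≤ N)
    (n : 𝒮 → 𝒜 → ℬ → ℕ) (Ph : 𝒮 → 𝒜 → ℬ → 𝒮 → ℝ) (hPh : IsKernel Ph)
    (rh : 𝒮 → 𝒜 → ℬ → ℝ) (hrh : IsReward rh)
    (Q₁ Q₂ : 𝒮 → 𝒜 → ℬ → ℝ)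
    (hQ₁ : ∀ s a b, Q₁ s a b ∈ Set.Icc (0 : ℝ) (1 / (1 - γ)))
    (hQ₂ : ∀ s a b, Q₂ s a b ∈ Set.Icc (0 : ℝ) (1 / (1 - γ))) :
    supNormQ (fun s a b =>
        TpeMinus γ δ Cb N n Ph rh Q₁ s a b - TpeMinus γ δ Cb N n Ph rh Q₂ s a b)
      ≤ γ * supNormQ (fun s a b => Q₁ s a b - Q₂ s a b) ∧
    supNormQ (fun s a b =>
        TpePlus γ δ Cb N n Ph rh Q₁ s a b - TpePlus γ δ Cb N n Ph rh Q₂ s a b)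
      ≤ γ * supNormQ (fun s a b => Q₁ s a b - Q₂ s a b) := by
    classical
  have h1γ0 : 0 < 1 - γ := by linarith
  set C := supNormQ (fun s a b => Q₁ s a b - Q₂ s a b) with hCdef
  have hC0 : 0 ≤ C := ZSMGAux.supNormQ_nonneg _
  have habs : ∀ s a b, |Q₁ s a b - Q₂ s a b| ≤ C := fun s a b => by
    rw [hCdef]
    exact ZSMGAux.abs_le_supNormQ (fun s a b => Q₁ s a b - Q₂ s a b) s a b
  have hQ₁' : ∀ s, ∀ (a : 𝒜) (b : ℬ), 0 ≤ Q₁ s a b ∧ Q₁ s a b ≤ 1 / (1 - γ) :=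
    fun s a b => ⟨(hQ₁ s a b).1, (hQ₁ s a b).2⟩
  have hQ₂' : ∀ s, ∀ (a : 𝒜) (b : ℬ), 0 ≤ Q₂ s a b ∧ Q₂ s a b ≤ 1 / (1 - γ) :=
    fun s a b => ⟨(hQ₂ s a b).1, (hQ₂ s a b).2⟩
  have hV1 : ∀ s, 0 ≤ valQ Q₁ s ∧ valQ Q₁ s ≤ 1 / (1 - γ) := fun s =>
    ZSMGAux.valQ_mem s (hQ₁' s)
  have hV2 : ∀ s, 0 ≤ valQ Q₂ s ∧ valQ Q₂ s ≤ 1 / (1 - γ) := fun s =>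
    ZSMGAux.valQ_mem s (hQ₂' s)
  have hVd : ∀ s', |valQ Q₁ s' - valQ Q₂ s'| ≤ C := fun s' =>
    ZSMGAux.valQ_abs_le s' (hQ₁' s') (hQ₂' s') (fun a b => habs s' a b)
  have hVd' : ∀ s', |valQ Q₂ s' - valQ Q₁ s'| ≤ C := fun s' => by
    rw [abs_sub_comm]; exact hVd s'
  constructor
  · apply ZSMGAux.supNormQ_le
    intro s a b
    have hkey := ZSMGAux.pen_diff' γ δ Cb hγl hγu hδ hCb N hN (n s a b) (Ph s a b)
      (hPh s a b) (valQ Q₁) (valQ Q₂) hV1 hV2 C hVd'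
    have hkey2 := ZSMGAux.pen_diff' γ δ Cb hγl hγu hδ hCb N hN (n s a b) (Ph s a b)
      (hPh s a b) (valQ Q₂) (valQ Q₁) hV2 hV1 C hVd
    have hx : |(rh s a b + γ * Pexp (Ph s a b) (valQ Q₁)
          - penalty γ δ Cb N (n s a b) (Ph s a b) (valQ Q₁))
        - (rh s a b + γ * Pexp (Ph s a b) (valQ Q₂)
          - penalty γ δ Cb N (n s a b) (Ph s a b) (valQ Q₂))| ≤ γ * C := by
      rw [abs_sub_le_iff]
      constructor
      · have e : γ * (C + (Pexp (Ph s a b) (valQ Q₂) - Pexp (Ph s a b) (valQ Q₁)))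
            = γ * C + γ * Pexp (Ph s a b) (valQ Q₂) - γ * Pexp (Ph s a b) (valQ Q₁) := by
          ring
        rw [e] at hkey
        linarith
      · have e : γ * (C + (Pexp (Ph s a b) (valQ Q₁) - Pexp (Ph s a b) (valQ Q₂)))
            = γ * C + γ * Pexp (Ph s a b) (valQ Q₁) - γ * Pexp (Ph s a b) (valQ Q₂) := by
          ring
        rw [e] at hkey2
        linarith
    calc |TpeMinus γ δ Cb N n Ph rh Q₁ s a b - TpeMinus γ δ Cb N n Ph rh Q₂ s a b|
        ≤ |(rh s a b + γ * Pexp (Ph s a b) (valQ Q₁)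
              - penalty γ δ Cb N (n s a b) (Ph s a b) (valQ Q₁))
            - (rh s a b + γ * Pexp (Ph s a b) (valQ Q₂)
              - penalty γ δ Cb N (n s a b) (Ph s a b) (valQ Q₂))| := by
          unfold TpeMinus
          exact abs_max_sub_max_le_abs _ _ _
      _ ≤ γ * C := hx
  · apply ZSMGAux.supNormQ_le
    intro s a b
    have hkey := ZSMGAux.pen_diff γ δ Cb hγl hγu hδ hCb N hN (n s a b) (Ph s a b)
      (hPh s a b) (valQ Q₂) (valQ Q₁) hV2 hV1 C hVd
    have hkey2 := ZSMGAux.pen_diff γ δ Cb hγl hγu hδ hCb N hN (n s a b) (Ph s a b)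
      (hPh s a b) (valQ Q₁) (valQ Q₂) hV1 hV2 C hVd'
    have hx : |(rh s a b + γ * Pexp (Ph s a b) (valQ Q₁)
          + penalty γ δ Cb N (n s a b) (Ph s a b) (valQ Q₁))
        - (rh s a b + γ * Pexp (Ph s a b) (valQ Q₂)
          + penalty γ δ Cb N (n s a b) (Ph s a b) (valQ Q₂))| ≤ γ * C := by
      rw [abs_sub_le_iff]
      constructor
      · have e : γ * (C - (Pexp (Ph s a b) (valQ Q₁) - Pexp (Ph s a b) (valQ Q₂)))
            = γ * C - γ * Pexp (Ph s a b) (valQ Q₁) + γ * Pexp (Ph s a b) (valQ Q₂) := by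
          ring
        rw [e] at hkey
        linarith
      · have e : γ * (C - (Pexp (Ph s a b) (valQ Q₂) - Pexp (Ph s a b) (valQ Q₁)))
            = γ * C - γ * Pexp (Ph s a b) (valQ Q₂) + γ * Pexp (Ph s a b) (valQ Q₁) := by
          ring
        rw [e] at hkey2
        linarith
    calc |TpePlus γ δ Cb N n Ph rh Q₁ s a b - TpePlus γ δ Cb N n Ph rh Q₂ s a b|
        ≤ |(rh s a b + γ * Pexp (Ph s a b) (valQ Q₁)
              + penalty γ δ Cb N (n s a b) (Ph s a b) (valQ Q₁))
            - (rh s a b + γ * Pexp (Ph s a b) (valQ Q₂)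
              + penalty γ δ Cb N (n s a b) (Ph s a b) (valQ Q₂))| := by
          unfold TpePlus
          exact ZSMGAux.abs_min_sub_min _ _ _
      _ ≤ γ * C := hx
end
end

section
/- In the hard instance ℳ𝒢_θ, for every pair of stationary policies μ : 𝒮 → Δ(𝒜), ν : 𝒮 → Δ(ℬ), writing μ_p = Σ_{a : θ_a = p} μ(a|0) and ν₀ = ν(0|0), the value function satisfies V^{μ,ν}(0) = 1 / (1 − γ + γ·μ_p·ν₀·(1−p) + γ·(1−μ_p)·ν₀·(1−q)) and V^{μ,ν}(s) = 0 for every s ≥ 1. -/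
open scoped BigOperators ENNReal Classical

noncomputable section

namespace ZSMG

variable {𝒮 𝒜 ℬ : Type} [Fintype 𝒮] [Fintype 𝒜] [Fintype ℬ]
  [DecidableEq 𝒮] [DecidableEq 𝒜] [DecidableEq ℬ]

theorem aux10 (S A B : ℕ) (γ ε : ℝ) (hγl : 2 / 3 ≤ γ) (hγu : γ < 1)
    (hε0 : 0 < ε) (hε1 : ε ≤ 1 / (42 * (1 - γ)))
    (θ : Fin A → ℝ)
    (hθ : ∀ a, θ a = γ + 14 * (1 - γ) ^ 2 * ε / γ ∨ θ a = γ - 14 * (1 - γ) ^ 2 * ε / γ)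
    (μ : Fin S → Fin A → ℝ) (ν : Fin S → Fin B → ℝ)
    (hμ : IsPolicy μ) (hν : IsPolicy ν)
    (s0 : Fin S) (b0 : Fin B) (hs0 : s0.val = 0) (hb0 : b0.val = 0) :
    Vpol γ (hardP θ) hardR μ ν s0 =
      1 / (1 - γ
        + γ * (∑ a, if θ a = γ + 14 * (1 - γ) ^ 2 * ε / γ then μ s0 a else 0)
            * ν s0 b0 * (1 - (γ + 14 * (1 - γ) ^ 2 * ε / γ))
        + γ * (1 - ∑ a, if θ a = γ + 14 * (1 - γ) ^ 2 * ε / γ then μ s0 a else 0)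
            * ν s0 b0 * (1 - (γ - 14 * (1 - γ) ^ 2 * ε / γ))) ∧
    ∀ s : Fin S, 1 ≤ s.val → Vpol γ (hardP θ) hardR μ ν s = 0 := by
  have hγ0 : (0:ℝ) < γ := by linarith
  have h1γ : (0:ℝ) < 1 - γ := by linarith
  set p : ℝ := γ + 14 * (1 - γ) ^ 2 * ε / γ with hpdef
  set q : ℝ := γ - 14 * (1 - γ) ^ 2 * ε / γ with hqdef
  set μp : ℝ := ∑ a, if θ a = p then μ s0 a else 0 with hμpdef
  set ν0 : ℝ := ν s0 b0 with hν0def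
  set D : ℝ := 1 - γ + γ * μp * ν0 * (1 - p) + γ * (1 - μp) * ν0 * (1 - q) with hDdef
  -- basic bounds
  have hμsum : ∑ a, μ s0 a = 1 := (hμ s0).2
  have hνsum : ∑ b, ν s0 b = 1 := (hν s0).2
  have hμnn : ∀ a, 0 ≤ μ s0 a := (hμ s0).1
  have hνnn : ∀ b, 0 ≤ ν s0 b := (hν s0).1
  have hμp0 : 0 ≤ μp := Finset.sum_nonneg (by intro a _; split <;> simp [hμnn a])
  have hμp1 : μp ≤ 1 := by
    rw [hμpdef, ← hμsum]
    exact Finset.sum_le_sum (by intro a _; split <;> simp [hμnn a])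
  have hν00 : 0 ≤ ν0 := hνnn b0
  have hε42 : 42 * (1 - γ) * ε ≤ 1 := by
    have h := (le_div_iff₀ (by positivity : (0:ℝ) < 42 * (1 - γ))).mp hε1
    linarith
  have htnn : 0 ≤ 14 * (1 - γ) ^ 2 * ε / γ := by positivity
  have htle : 14 * (1 - γ) ^ 2 * ε / γ ≤ 1 - γ := by
    rw [div_le_iff₀ hγ0]
    nlinarith [mul_nonneg (mul_nonneg (by linarith : (0:ℝ) ≤ 1 - γ) hε0.le) h1γ.le]
  have hp1 : p ≤ 1 := by rw [hpdef]; linarith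
  have hq1 : q ≤ 1 := by rw [hqdef]; linarith
  have hD : 0 < D := by
    have h1 : 0 ≤ γ * μp * ν0 * (1 - p) :=
      mul_nonneg (mul_nonneg (mul_nonneg hγ0.le hμp0) hν00) (by linarith)
    have h2 : 0 ≤ γ * (1 - μp) * ν0 * (1 - q) :=
      mul_nonneg (mul_nonneg (mul_nonneg hγ0.le (by linarith)) hν00) (by linarith)
    rw [hDdef]; linarith
  -- the candidate value function
  set V : Fin S → ℝ := fun s => if s.val = 0 then 1 / D else 0 with hVdef
  set M : Matrix (Fin S) (Fin S) ℝ :=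
    (1 : Matrix (Fin S) (Fin S) ℝ) - γ • Pmat (hardP θ) μ ν with hMdef
  -- Σ μ θ
  have hsumθ : ∑ a, μ s0 a * θ a = μp * p + (1 - μp) * q := by
    have : ∀ a, μ s0 a * θ a
        = (if θ a = p then μ s0 a else 0) * p + (μ s0 a - if θ a = p then μ s0 a else 0) * q := by
      intro a
      by_cases h2 : θ a = p
      · rw [if_pos h2, h2]; ring
      · rw [if_neg h2, (hθ a).resolve_left h2]; ring
    rw [Finset.sum_congr rfl (fun a _ => this a), Finset.sum_add_distrib,
        ← Finset.sum_mul, ← Finset.sum_mul, Finset.sum_sub_distrib, hμsum, ← hμpdef]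
  -- entries of Pmat
  have hPstay : ∀ (s : Fin S), s.val ≠ 0 → ∀ (s' : Fin S) (a : Fin A) (b : Fin B),
      hardP θ s a b s' = if s' = s then 1 else 0 := by
    intro s hs s' a b
    simp [hardP, hs]
  have hPdiag : ∀ s : Fin S, s.val ≠ 0 → Pmat (hardP θ) μ ν s s = 1 := by
    intro s hs
    simp [Pmat, hPstay s hs, ← Finset.mul_sum, (hν s).2, (hμ s).2]
  have hPoff : ∀ s s' : Fin S, s.val ≠ 0 → s' ≠ s → Pmat (hardP θ) μ ν s s' = 0 := by
    intro s s' hs hne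
    simp [Pmat, hPstay s hs, hne]
  have hb0' : ∀ (b : Fin B) a, hardP θ s0 a b s0 = if b = b0 then θ a else 1 := by
    intro b a
    by_cases h : b = b0
    · subst h; simp [hardP, hs0, hb0]
    · have hbv : b.val ≠ 0 := fun hv => h (Fin.ext (by omega))
      simp [hardP, hbv, h]
  have hP00 : Pmat (hardP θ) μ ν s0 s0 = 1 + ν0 * ((∑ a, μ s0 a * θ a) - 1) := by
    have hinner : ∀ a, ∑ b, μ s0 a * ν s0 b * hardP θ s0 a b s0
        = μ s0 a + μ s0 a * ν0 * (θ a - 1) := by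
      intro a
      have h1 : ∀ b, μ s0 a * ν s0 b * hardP θ s0 a b s0
          = μ s0 a * ν s0 b + (if b = b0 then μ s0 a * ν0 * (θ a - 1) else 0) := by
        intro b
        rw [hb0' b a]
        by_cases h : b = b0
        · subst h; rw [← hν0def]; simp; ring
        · simp [h]
      rw [Finset.sum_congr rfl (fun b _ => h1 b), Finset.sum_add_distrib,
          Finset.sum_ite_eq' Finset.univ b0, if_pos (Finset.mem_univ b0),
          ← Finset.mul_sum, hνsum, mul_one]
    simp only [Pmat, Matrix.of_apply]
    rw [Finset.sum_congr rfl (fun a _ => hinner a), Finset.sum_add_distrib, hμsum]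
    have h2 : ∑ a, μ s0 a * ν0 * (θ a - 1) = ν0 * ((∑ a, μ s0 a * θ a) - 1) := by
      rw [Finset.sum_congr rfl
        (fun a _ => show μ s0 a * ν0 * (θ a - 1) = ν0 * (μ s0 a * θ a) - ν0 * μ s0 a by ring),
        Finset.sum_sub_distrib, ← Finset.mul_sum, ← Finset.mul_sum, hμsum]
      ring
    rw [h2]
  -- rPol
  have hr : ∀ s : Fin S, rPol hardR μ ν s = if s.val = 0 then 1 else 0 := by
    intro s
    simp only [rPol, hardR]
    by_cases h : s.val = 0 <;>
      simp [h, ← Finset.mul_sum, (hν s).2, (hμ s).2]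
  -- M.mulVec V = rPol
  have hMs0 : M s0 s0 = D := by
    rw [hMdef]
    simp only [Matrix.sub_apply, Matrix.smul_apply, Matrix.one_apply_eq, smul_eq_mul]
    rw [hP00, hsumθ, hDdef]
    ring
  have hMV : M.mulVec V = rPol hardR μ ν := by
    funext s
    have hred : M.mulVec V s = M s s0 * (1 / D) := by
      have hexp : M.mulVec V s = ∑ s', M s s' * V s' := by
        simp [Matrix.mulVec, dotProduct]
      rw [hexp, Finset.sum_eq_single s0]
      · rw [hVdef]; simp [hs0]
      · intro s' _ hne
        have hv : s'.val ≠ 0 := fun h => hne (Fin.ext (by omega))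
        rw [hVdef]; simp [hv]
      · intro h; exact absurd (Finset.mem_univ s0) h
    rw [hred, hr]
    by_cases h : s.val = 0
    · have : s = s0 := Fin.ext (by omega)
      subst this
      rw [hMs0, if_pos h]
      field_simp
    · have hne : s0 ≠ s := fun he => h (by omega)
      have : M s s0 = 0 := by
        rw [hMdef]
        simp [Matrix.one_apply, (Ne.symm hne), hPoff s s0 h hne]
      rw [this, if_neg h, zero_mul]
  -- invertibility
  have htri : M.BlockTriangular id := by
    intro s s' hlt
    have hvlt : s'.val < s.val := hlt
    have hs : s.val ≠ 0 := by omega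
    have hne : s' ≠ s := fun h => by subst h; exact lt_irrefl _ hvlt
    rw [hMdef]
    simp [Matrix.one_apply, (Ne.symm hne), hPoff s s' hs hne]
  have hMdiag : ∀ s : Fin S, s.val ≠ 0 → M s s = 1 - γ := by
    intro s hs
    rw [hMdef]
    simp [Matrix.one_apply, hPdiag s hs]
  have hdet : IsUnit M.det := by
    rw [Matrix.det_of_upperTriangular htri, isUnit_iff_ne_zero]
    rw [Finset.prod_ne_zero_iff]
    intro s _
    by_cases h : s.val = 0
    · have : s = s0 := Fin.ext (by omega)
      rw [this, hMs0]; exact hD.ne'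
    · rw [hMdiag s h]; exact h1γ.ne'
  have hV : Vpol γ (hardP θ) hardR μ ν = V := by
    unfold Vpol
    rw [← hMdef, ← hMV, Matrix.mulVec_mulVec, Matrix.nonsing_inv_mul M hdet,
      Matrix.one_mulVec]
  constructor
  · rw [hV, hVdef]; simp [hs0, ← hDdef]
  · intro s hs
    rw [hV, hVdef]
    simp [show s.val ≠ 0 by omega]

end ZSMG


open ZSMG in
/-- value functions of the hard instance `ℳ𝒢_θ`. -/
theorem statement10 (S A B : ℕ) (hS : 2 ≤ S) (hA : 2 ≤ A) (hB : 2 ≤ B)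
    (γ ε : ℝ) (hγl : 2 / 3 ≤ γ) (hγu : γ < 1)
    (hε0 : 0 < ε) (hε1 : ε ≤ 1 / (42 * (1 - γ)))
    (θ : Fin A → ℝ)
    (hθ : ∀ a, θ a = γ + 14 * (1 - γ) ^ 2 * ε / γ ∨ θ a = γ - 14 * (1 - γ) ^ 2 * ε / γ)
    (μ : Fin S → Fin A → ℝ) (ν : Fin S → Fin B → ℝ)
    (hμ : IsPolicy μ) (hν : IsPolicy ν) :
    Vpol γ (hardP θ) hardR μ ν (⟨0, by omega⟩ : Fin S) =
      1 / (1 - γ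
        + γ * (∑ a, if θ a = γ + 14 * (1 - γ) ^ 2 * ε / γ then μ ⟨0, by omega⟩ a else 0)
            * ν ⟨0, by omega⟩ (⟨0, by omega⟩ : Fin B)
            * (1 - (γ + 14 * (1 - γ) ^ 2 * ε / γ))
        + γ * (1 - ∑ a, if θ a = γ + 14 * (1 - γ) ^ 2 * ε / γ then μ ⟨0, by omega⟩ a else 0)
            * ν ⟨0, by omega⟩ (⟨0, by omega⟩ : Fin B)
            * (1 - (γ - 14 * (1 - γ) ^ 2 * ε / γ))) ∧
    ∀ s : Fin S, 1 ≤ s.val → Vpol γ (hardP θ) hardR μ ν s = 0 := by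
  exact ZSMG.aux10 S A B γ ε hγl hγu hε0 hε1 θ hθ μ ν hμ hν ⟨0, by omega⟩ ⟨0, by omega⟩ rfl rfl
end
end

section
/- In the hard instance ℳ𝒢_θ, assume 𝒜_{p,θ} = {a : θ_a = p} is nonempty and let μ*_θ(a|s) = 1{a ∈ 𝒜_{p,θ}}/|𝒜_{p,θ}| and ν*_θ(b|s) = 1{b=0} for all s. Then (μ*_θ, ν*_θ) is a Nash equilibrium of ℳ𝒢_θ, and moreover max{ sup_{μ,s,a,b} min{d^{μ,ν*_θ}(s,a,b;ρ), 1/(S(A+B))}/d_b(s,a,b), sup_{ν,s,a,b} min{d^{μ*_θ,ν}(s,a,b;ρ), 1/(S(A+B))}/d_b(s,a,b) } = C*_clipped (convention 0/0 = 0); hence {ℳ𝒢_θ, ρ, d_b} belongs to the class 𝖬𝖦(C*_clipped). -/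
open scoped BigOperators ENNReal Classical

noncomputable section

/-!
Under any pair of stationary policies the hard instance is the chain in which state `0` stays
put with probability `x = 1 - ν(0|0) (1 - ∑ₐ μ(a|0) θₐ)` and otherwise moves to the absorbing
state `1`, all other states being absorbing as well. Solving the Bellman and flow equations gives
`V(0) = 1 / (1 - γx)`, `V = 0` elsewhere, and occupancy `(1 - γ) / (1 - γx)` at `0`,
`γ(1 - x) / (1 - γx)` at `1` and `0` elsewhere. Since `V(0)` increases with `x`, the max-player
wants `x` large, which the uniform policy on `{θₐ = p}` achieves (`x = p`), and the min-player
wants `x` small, which `b = 0` achieves. The clipped ratio is at most `C` at state `0` by the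
choice of `d_b`, at state `1` because `2AB / (S(A + B)) ≤ C`, and vanishes elsewhere; it equals
`C` at state `0` under a deterministic action with `θₐ = p`, whose occupancy
`(1 - γ) / (1 - γp) ≥ 1/2` exceeds the clipping level.
-/

namespace ZSMG

open Finset
open scoped Matrix

theorem det_one_sub_smul_ne_zero {ι : Type} [Fintype ι] [DecidableEq ι] {M : Matrix ι ι ℝ}
    (hM0 : ∀ i j, 0 ≤ M i j) (hM1 : ∀ i, ∑ j, M i j = 1) {γ : ℝ} (hγ0 : 0 ≤ γ) (hγ1 : γ < 1) :
    (1 - γ • M).det ≠ 0 := by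
  refine det_ne_zero_of_sum_row_lt_diag fun k => ?_
  have hoff : ∀ j ∈ univ.erase k, ‖(1 - γ • M) k j‖ = γ * M k j := fun j hj => by
    rw [Matrix.sub_apply, Matrix.one_apply_ne (ne_of_mem_erase hj).symm, Matrix.smul_apply,
      smul_eq_mul, zero_sub, norm_neg, Real.norm_of_nonneg (mul_nonneg hγ0 (hM0 k j))]
  have hkk : M k k ≤ 1 := hM1 k ▸ single_le_sum (fun j _ => hM0 k j) (mem_univ k)
  rw [sum_congr rfl hoff, ← mul_sum, sum_erase_eq_sub (mem_univ k), hM1, Matrix.sub_apply,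
    Matrix.one_apply_eq, Matrix.smul_apply, smul_eq_mul,
    Real.norm_of_nonneg (by nlinarith [hM0 k k])]
  nlinarith [hM0 k k]

section ValueAndOccupancy

variable {𝒮 𝒜 ℬ : Type} [Fintype 𝒮] [Fintype 𝒜] [Fintype ℬ] [DecidableEq 𝒮]

theorem Vpol_eq_of_mulVec_eq {γ : ℝ} {P : 𝒮 → 𝒜 → ℬ → 𝒮 → ℝ} {r : 𝒮 → 𝒜 → ℬ → ℝ}
    {μ : 𝒮 → 𝒜 → ℝ} {ν : 𝒮 → ℬ → ℝ} {V : 𝒮 → ℝ}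
    (hdet : ((1 : Matrix 𝒮 𝒮 ℝ) - γ • Pmat P μ ν).det ≠ 0)
    (hV : ((1 : Matrix 𝒮 𝒮 ℝ) - γ • Pmat P μ ν) *ᵥ V = rPol r μ ν) :
    Vpol γ P r μ ν = V := by
  rw [Vpol, ← hV, Matrix.mulVec_mulVec,
    Matrix.nonsing_inv_mul _ (isUnit_iff_ne_zero.mpr hdet), Matrix.one_mulVec]

theorem dOcc_eq_of_vecMul_eq {γ : ℝ} {P : 𝒮 → 𝒜 → ℬ → 𝒮 → ℝ}
    {μ : 𝒮 → 𝒜 → ℝ} {ν : 𝒮 → ℬ → ℝ} {ρ u : 𝒮 → ℝ}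
    (hdet : ((1 : Matrix 𝒮 𝒮 ℝ) - γ • Pmat P μ ν).det ≠ 0)
    (hu : u ᵥ* ((1 : Matrix 𝒮 𝒮 ℝ) - γ • Pmat P μ ν) = ρ) :
    dOcc γ P μ ν ρ = fun s => (1 - γ) * u s := by
  funext s
  rw [dOcc, ← hu, Matrix.vecMul_vecMul,
    Matrix.mul_nonsing_inv _ (isUnit_iff_ne_zero.mpr hdet), Matrix.vecMul_one]

end ValueAndOccupancy

section Policy

variable {𝒮 𝒜 : Type} [Fintype 𝒜]

namespace IsPolicy

variable {μ : 𝒮 → 𝒜 → ℝ}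

theorem nonneg (hμ : IsPolicy μ) (s : 𝒮) (a : 𝒜) : 0 ≤ μ s a := (hμ s).1 a

theorem sum_eq_one (hμ : IsPolicy μ) (s : 𝒮) : ∑ a, μ s a = 1 := (hμ s).2

theorem le_one (hμ : IsPolicy μ) (s : 𝒮) (a : 𝒜) : μ s a ≤ 1 :=
  hμ.sum_eq_one s ▸ single_le_sum (fun a _ => hμ.nonneg s a) (mem_univ a)

theorem sum_mul_le (hμ : IsPolicy μ) (s : 𝒮) {f : 𝒜 → ℝ} {c : ℝ} (hf : ∀ a, f a ≤ c) :
    ∑ a, μ s a * f a ≤ c :=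
  calc ∑ a, μ s a * f a ≤ ∑ a, μ s a * c :=
        sum_le_sum fun a _ => mul_le_mul_of_nonneg_left (hf a) (hμ.nonneg s a)
    _ = c := by rw [← sum_mul, hμ.sum_eq_one, one_mul]

theorem le_sum_mul (hμ : IsPolicy μ) (s : 𝒮) {f : 𝒜 → ℝ} {c : ℝ} (hf : ∀ a, c ≤ f a) :
    c ≤ ∑ a, μ s a * f a :=
  calc c = ∑ a, μ s a * c := by rw [← sum_mul, hμ.sum_eq_one, one_mul]
    _ ≤ ∑ a, μ s a * f a :=
        sum_le_sum fun a _ => mul_le_mul_of_nonneg_left (hf a) (hμ.nonneg s a)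

end IsPolicy

theorem isPolicy_uniformOn {T : Finset 𝒜} (hT : T.Nonempty) :
    IsPolicy (fun (_ : 𝒮) a => if a ∈ T then ((#T : ℕ) : ℝ)⁻¹ else 0) := fun _ => by
  refine ⟨fun a => by positivity, ?_⟩
  rw [← sum_filter, filter_mem_eq_inter, univ_inter, sum_const, nsmul_eq_mul,
    mul_inv_cancel₀ (by exact_mod_cast hT.card_pos.ne')]

theorem sum_uniformOn_mul {T : Finset 𝒜} (hT : T.Nonempty) {f : 𝒜 → ℝ} {c : ℝ}
    (hf : ∀ a ∈ T, f a = c) :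
    ∑ a, (if a ∈ T then ((#T : ℕ) : ℝ)⁻¹ else 0) * f a = c := by
  simp only [ite_mul, zero_mul]
  rw [← sum_filter, filter_mem_eq_inter, univ_inter, sum_congr rfl fun a ha => by rw [hf a ha],
    sum_const, nsmul_eq_mul, ← mul_assoc, mul_inv_cancel₀ (by exact_mod_cast hT.card_pos.ne'),
    one_mul]

theorem isPolicy_dirac [DecidableEq 𝒜] (a₀ : 𝒜) :
    IsPolicy (fun (_ : 𝒮) a => if a = a₀ then (1 : ℝ) else 0) := fun _ =>
  ⟨fun a => by positivity, by rw [sum_ite_eq']; simp⟩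

end Policy

theorem _root_.ENNReal.ofReal_div_ofReal_le_of_le_mul {x y c : ℝ} (hy : 0 < y) (h : x ≤ c * y) :
    ENNReal.ofReal x / ENNReal.ofReal y ≤ ENNReal.ofReal c := by
  rw [← ENNReal.ofReal_div_of_pos hy]
  exact ENNReal.ofReal_le_ofReal ((div_le_iff₀ hy).mpr h)

section Clipping

variable {𝒮 𝒜 ℬ : Type} [Fintype 𝒮] [Fintype 𝒜] [Fintype ℬ] [DecidableEq 𝒮]

def clipRatio (γ : ℝ) (P : 𝒮 → 𝒜 → ℬ → 𝒮 → ℝ) (ρ : 𝒮 → ℝ) (d : 𝒮 → 𝒜 → ℬ → ℝ)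
    (μ : 𝒮 → 𝒜 → ℝ) (ν : 𝒮 → ℬ → ℝ) (s : 𝒮) (a : 𝒜) (b : ℬ) : ℝ≥0∞ :=
  ENNReal.ofReal (min (dOcc3 γ P μ ν ρ s a b)
      ((Fintype.card 𝒮 * (Fintype.card 𝒜 + Fintype.card ℬ) : ℝ))⁻¹) /
    ENNReal.ofReal (d s a b)

theorem clipCoeff_eq_of_forall_le {γ : ℝ} {P : 𝒮 → 𝒜 → ℬ → 𝒮 → ℝ} {ρ : 𝒮 → ℝ}
    {d : 𝒮 → 𝒜 → ℬ → ℝ} {μs : 𝒮 → 𝒜 → ℝ} {νs : 𝒮 → ℬ → ℝ} {c : ℝ≥0∞}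
    (hμ : ∀ μ, IsPolicy μ → ∀ s a b, clipRatio γ P ρ d μ νs s a b ≤ c)
    (hν : ∀ ν, IsPolicy ν → ∀ s a b, clipRatio γ P ρ d μs ν s a b ≤ c)
    {μ : 𝒮 → 𝒜 → ℝ} (hμ₀ : IsPolicy μ) {s : 𝒮} {a : 𝒜} {b : ℬ}
    (hc : clipRatio γ P ρ d μ νs s a b = c) :
    clipCoeff γ P ρ d μs νs = c :=
  le_antisymm
    (max_le (iSup_le fun μ => iSup_le fun s => iSup_le fun a => iSup_le fun b =>
        hμ μ.1 μ.2 s a b)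
      (iSup_le fun ν => iSup_le fun s => iSup_le fun a => iSup_le fun b => hν ν.1 ν.2 s a b))
    (le_max_of_le_left <| le_iSup_of_le ⟨μ, hμ₀⟩ <| le_iSup_of_le s <| le_iSup_of_le a <|
      le_iSup_of_le b hc.ge)

end Clipping

section BehaviorDist

variable {S A B : ℕ}

/-- The data distribution `d_b` of the lower-bound construction. -/
def hardBehaviorDist (S A B : ℕ) (C : ℝ) : Fin S → Fin A → Fin B → ℝ := fun s _ _ =>
  if s.val = 0 then (C * (S : ℝ) * ((A : ℝ) + (B : ℝ)))⁻¹
  else if s.val = 1 then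
    (1 - (A : ℝ) * (B : ℝ) / (C * (S : ℝ) * ((A : ℝ) + (B : ℝ)))) / ((A : ℝ) * (B : ℝ))
  else 0

theorem clipRatio_hardBehaviorDist_le {γ : ℝ} {P : Fin S → Fin A → Fin B → Fin S → ℝ}
    {ρ : Fin S → ℝ} {μ : Fin S → Fin A → ℝ} {ν : Fin S → Fin B → ℝ} {C : ℝ}
    (hC : 2 * (A : ℝ) * (B : ℝ) / ((S : ℝ) * ((A : ℝ) + (B : ℝ))) ≤ C)
    {s : Fin S} {a : Fin A} {b : Fin B} (hd : 2 ≤ s.val → dOcc3 γ P μ ν ρ s a b = 0) :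
    clipRatio γ P ρ (hardBehaviorDist S A B C) μ ν s a b ≤ ENNReal.ofReal C := by
  have hS : (0 : ℝ) < S := by exact_mod_cast s.pos
  have hA : (0 : ℝ) < A := by exact_mod_cast a.pos
  have hB : (0 : ℝ) < B := by exact_mod_cast b.pos
  have hN : (0 : ℝ) < S * (A + B) := by positivity
  have hCpos : 0 < C := (by positivity : (0 : ℝ) < 2 * A * B / (S * (A + B))).trans_le hC
  have hAB : 2 * (A * B) ≤ C * (S * (A + B)) := by
    rw [div_le_iff₀ hN] at hC; linarith
  have hclip := min_le_right (dOcc3 γ P μ ν ρ s a b) ((S : ℝ) * (A + B))⁻¹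
  simp only [clipRatio, hardBehaviorDist, Fintype.card_fin]
  rcases (show s.val = 0 ∨ s.val = 1 ∨ 2 ≤ s.val by omega) with h0 | h1 | h2
  · rw [if_pos h0]
    refine ENNReal.ofReal_div_ofReal_le_of_le_mul (by positivity) (hclip.trans_eq ?_)
    field_simp
  · rw [if_neg (by omega), if_pos h1]
    have hpos : 0 < 1 - A * B / (C * S * (A + B)) := by
      rw [sub_pos, div_lt_one (by positivity)]; nlinarith
    refine ENNReal.ofReal_div_ofReal_le_of_le_mul (by positivity) (hclip.trans ?_)
    have hvalue : C * ((1 - A * B / (C * S * (A + B))) / (A * B))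
        = C / (A * B) - ((S : ℝ) * (A + B))⁻¹ := by
      field_simp
    rw [hvalue, le_sub_iff_add_le, le_div_iff₀ (by positivity)]
    calc (((S : ℝ) * (A + B))⁻¹ + ((S : ℝ) * (A + B))⁻¹) * (A * B)
        = 2 * A * B / (S * (A + B)) := by ring
      _ ≤ C := hC
  · rw [hd h2, min_eq_left (by positivity), ENNReal.ofReal_zero, ENNReal.zero_div]
    exact zero_le

theorem clipRatio_hardBehaviorDist_eq {γ : ℝ} {P : Fin S → Fin A → Fin B → Fin S → ℝ}
    {ρ : Fin S → ℝ} {μ : Fin S → Fin A → ℝ} {ν : Fin S → Fin B → ℝ} {C : ℝ}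
    (hC : 2 * (A : ℝ) * (B : ℝ) / ((S : ℝ) * ((A : ℝ) + (B : ℝ))) ≤ C)
    {s : Fin S} {a : Fin A} {b : Fin B} (hs : s.val = 0)
    (hd : ((S : ℝ) * (A + B))⁻¹ ≤ dOcc3 γ P μ ν ρ s a b) :
    clipRatio γ P ρ (hardBehaviorDist S A B C) μ ν s a b = ENNReal.ofReal C := by
  have hS : (0 : ℝ) < S := by exact_mod_cast s.pos
  have hA : (0 : ℝ) < A := by exact_mod_cast a.pos
  have hB : (0 : ℝ) < B := by exact_mod_cast b.pos
  have hCpos : 0 < C := (by positivity : (0 : ℝ) < 2 * A * B / (S * (A + B))).trans_le hC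
  simp only [clipRatio, hardBehaviorDist, Fintype.card_fin, if_pos hs, min_eq_right hd]
  rw [← ENNReal.ofReal_div_of_pos (by positivity)]
  congr 1
  field_simp

end BehaviorDist

section HardInstance

variable {n m A : ℕ}

def hardChain (n : ℕ) (x : ℝ) : Matrix (Fin (n + 2)) (Fin (n + 2)) ℝ :=
  Matrix.of fun s s' =>
    if s = 0 then x * (if s' = 0 then 1 else 0) + (1 - x) * (if s' = 1 then 1 else 0)
    else if s' = s then 1 else 0

def stayProb (θ : Fin A → ℝ) (μ : Fin (n + 2) → Fin A → ℝ)
    (ν : Fin (n + 2) → Fin (m + 1) → ℝ) : ℝ :=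
  1 - ν 0 0 * (1 - ∑ a, μ 0 a * θ a)

theorem _root_.Fin.val_eq_one_iff (s : Fin (n + 2)) : s.val = 1 ↔ s = 1 := by
  rw [Fin.ext_iff, Fin.val_one]

theorem hardP_apply (θ : Fin A → ℝ) (s : Fin (n + 2)) (a : Fin A) (b : Fin (m + 1))
    (s' : Fin (n + 2)) :
    hardP θ s a b s' =
      if s = 0 ∧ b = 0 then θ a * (if s' = 0 then 1 else 0) + (1 - θ a) * (if s' = 1 then 1 else 0)
      else if s' = s then 1 else 0 := by
  simp only [hardP, Fin.val_eq_zero_iff, Fin.val_eq_one_iff]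

theorem IsPolicy.sum_mul_ite_zero {𝒮 : Type} {ν : 𝒮 → Fin (m + 1) → ℝ} (hν : IsPolicy ν)
    (s : 𝒮) (x y : ℝ) :
    ∑ b, ν s b * (if b = 0 then x else y) = ν s 0 * x + (1 - ν s 0) * y := by
  have h := hν.sum_eq_one s
  rw [Fin.sum_univ_succ] at h
  simp only [Fin.sum_univ_succ, Fin.succ_ne_zero, if_true, if_false, ← sum_mul]
  rw [← h]; ring

theorem isPolicy_ite_val_eq_zero {𝒮 : Type} :
    IsPolicy (fun (_ : 𝒮) (b : Fin (m + 1)) => if b.val = 0 then (1 : ℝ) else 0) := by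
  simpa only [Fin.val_eq_zero_iff] using isPolicy_dirac (0 : Fin (m + 1))

theorem Pmat_hardP {θ : Fin A → ℝ} {μ : Fin (n + 2) → Fin A → ℝ}
    {ν : Fin (n + 2) → Fin (m + 1) → ℝ} (hμ : IsPolicy μ) (hν : IsPolicy ν) :
    Pmat (hardP θ) μ ν = hardChain n (stayProb θ μ ν) := by
  ext s s'
  simp only [Pmat, hardChain, stayProb, Matrix.of_apply, hardP_apply, mul_assoc, ← mul_sum]
  rcases eq_or_ne s 0 with rfl | hs
  · simp only [true_and, hν.sum_mul_ite_zero, if_true]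
    generalize (if s' = 0 then (1 : ℝ) else 0) = i₀
    generalize (if s' = 1 then (1 : ℝ) else 0) = i₁
    have hlin : ∀ a, μ 0 a * (ν 0 0 * (θ a * i₀ + (1 - θ a) * i₁) + (1 - ν 0 0) * i₀)
        = μ 0 a * θ a * (ν 0 0 * (i₀ - i₁)) + μ 0 a * (ν 0 0 * i₁ + (1 - ν 0 0) * i₀) :=
      fun a => by ring
    rw [sum_congr rfl fun a _ => hlin a, sum_add_distrib, ← sum_mul, ← sum_mul,
      hμ.sum_eq_one]
    ring
  · simp only [hs, false_and, if_false, ← sum_mul, hν.sum_eq_one, hμ.sum_eq_one, one_mul]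

theorem stayProb_mem_Icc {θ : Fin A → ℝ} (hθ : ∀ a, θ a ∈ Set.Icc 0 1)
    {μ : Fin (n + 2) → Fin A → ℝ} {ν : Fin (n + 2) → Fin (m + 1) → ℝ}
    (hμ : IsPolicy μ) (hν : IsPolicy ν) : stayProb θ μ ν ∈ Set.Icc 0 1 := by
  have hmean0 := hμ.le_sum_mul 0 fun a => (hθ a).1
  have hmean1 := hμ.sum_mul_le 0 fun a => (hθ a).2
  have hν0 := hν.nonneg 0 0
  have hν1 := hν.le_one 0 0
  constructor <;> simp only [stayProb] <;> nlinarith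

theorem hardChain_nonneg {x : ℝ} (hx : x ∈ Set.Icc 0 1) (s s' : Fin (n + 2)) :
    0 ≤ hardChain n x s s' := by
  obtain ⟨hx0, hx1⟩ := hx
  simp only [hardChain, Matrix.of_apply]
  split_ifs <;> linarith

theorem sum_hardChain_apply (x : ℝ) (s : Fin (n + 2)) : ∑ s', hardChain n x s s' = 1 := by
  simp only [hardChain, Matrix.of_apply]
  split_ifs <;> simp [sum_add_distrib]

theorem det_one_sub_smul_hardChain_ne_zero {γ x : ℝ} (hγ0 : 0 ≤ γ) (hγ1 : γ < 1)
    (hx : x ∈ Set.Icc 0 1) : (1 - γ • hardChain n x).det ≠ 0 :=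
  det_one_sub_smul_ne_zero (hardChain_nonneg hx) (sum_hardChain_apply x) hγ0 hγ1

theorem rPol_hardR {μ : Fin (n + 2) → Fin A → ℝ} {ν : Fin (n + 2) → Fin (m + 1) → ℝ}
    (hμ : IsPolicy μ) (hν : IsPolicy ν) :
    rPol hardR μ ν = fun s => if s = 0 then 1 else 0 := by
  funext s
  simp only [rPol, hardR, Fin.val_eq_zero_iff, mul_assoc, ← mul_sum, ← sum_mul,
    hν.sum_eq_one, hμ.sum_eq_one, one_mul]

theorem Vpol_hardP {γ : ℝ} (hγ0 : 0 ≤ γ) (hγ1 : γ < 1) {θ : Fin A → ℝ}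
    (hθ : ∀ a, θ a ∈ Set.Icc 0 1) {μ : Fin (n + 2) → Fin A → ℝ}
    {ν : Fin (n + 2) → Fin (m + 1) → ℝ} (hμ : IsPolicy μ) (hν : IsPolicy ν) :
    Vpol γ (hardP θ) hardR μ ν = fun s => if s = 0 then (1 - γ * stayProb θ μ ν)⁻¹ else 0 := by
  have hx := stayProb_mem_Icc hθ hμ hν
  have hpos : 0 < 1 - γ * stayProb θ μ ν := by nlinarith [hx.1, hx.2]
  refine Vpol_eq_of_mulVec_eq
    (by rw [Pmat_hardP hμ hν]; exact det_one_sub_smul_hardChain_ne_zero hγ0 hγ1 hx) ?_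
  rw [Pmat_hardP hμ hν, rPol_hardR hμ hν]
  funext s
  rcases eq_or_ne s 0 with rfl | hs
  · simp [Matrix.mulVec, dotProduct, hardChain, Matrix.one_apply, hpos.ne']
  · simp [Matrix.mulVec, dotProduct, hardChain, Matrix.one_apply, hs, hs.symm]

theorem dOcc_hardP {γ : ℝ} (hγ0 : 0 ≤ γ) (hγ1 : γ < 1) {θ : Fin A → ℝ}
    (hθ : ∀ a, θ a ∈ Set.Icc 0 1) {μ : Fin (n + 2) → Fin A → ℝ}
    {ν : Fin (n + 2) → Fin (m + 1) → ℝ} (hμ : IsPolicy μ) (hν : IsPolicy ν) :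
    dOcc γ (hardP θ) μ ν (fun s => if s.val = 0 then 1 else 0) = fun s =>
      if s = 0 then (1 - γ) / (1 - γ * stayProb θ μ ν)
      else if s = 1 then γ * (1 - stayProb θ μ ν) / (1 - γ * stayProb θ μ ν) else 0 := by
  have hP := Pmat_hardP (θ := θ) hμ hν
  have hx := stayProb_mem_Icc hθ hμ hν
  set x := stayProb θ μ ν
  have hpos : 1 - γ * x ≠ 0 := by nlinarith [hx.1, hx.2]
  have hγ : 1 - γ ≠ 0 := by linarith
  have hflow : (Pi.single 0 (1 - γ * x)⁻¹ + Pi.single 1 (γ * (1 - x) / ((1 - γ * x) * (1 - γ))))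
      ᵥ* (1 - γ • Pmat (hardP θ) μ ν) = fun s => if s.val = 0 then 1 else 0 := by
    funext s
    simp only [hP, Fin.val_eq_zero_iff]
    rcases eq_or_ne s 0 with rfl | hs0
    · simp [Matrix.add_vecMul, Matrix.single_vecMul, hardChain, hpos]
    rcases eq_or_ne s 1 with rfl | hs1
    · simp only [hardChain, Matrix.add_vecMul, Matrix.single_vecMul, Pi.add_apply,
        Pi.smul_apply, Matrix.row_apply, Matrix.sub_apply, Matrix.smul_apply, Matrix.of_apply,
        Matrix.one_apply_eq, Matrix.one_apply_ne zero_ne_one, one_ne_zero, if_true, if_false,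
        smul_eq_mul]
      field_simp
      ring
    · simp [Matrix.add_vecMul, Matrix.single_vecMul, hardChain, hs0, hs1,
        Ne.symm hs0, Ne.symm hs1]
  rw [dOcc_eq_of_vecMul_eq (by rw [hP]; exact det_one_sub_smul_hardChain_ne_zero hγ0 hγ1 hx) hflow]
  funext s
  rcases eq_or_ne s 0 with rfl | hs0
  · simp only [Pi.add_apply, Pi.single_eq_same, Pi.single_eq_of_ne zero_ne_one, add_zero,
      if_true]
    field_simp
  rcases eq_or_ne s 1 with rfl | hs1
  · simp only [Pi.add_apply, Pi.single_eq_same, Pi.single_eq_of_ne one_ne_zero, zero_add,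
      one_ne_zero, if_true, if_false]
    field_simp
  · simp [hs0, hs1]

theorem Vpol_hardP_le_of_stayProb_le {γ : ℝ} (hγ0 : 0 ≤ γ) (hγ1 : γ < 1) {θ : Fin A → ℝ}
    (hθ : ∀ a, θ a ∈ Set.Icc 0 1) {μ μ' : Fin (n + 2) → Fin A → ℝ}
    {ν ν' : Fin (n + 2) → Fin (m + 1) → ℝ} (hμ : IsPolicy μ) (hν : IsPolicy ν)
    (hμ' : IsPolicy μ') (hν' : IsPolicy ν') (h : stayProb θ μ ν ≤ stayProb θ μ' ν')
    (s : Fin (n + 2)) :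
    Vpol γ (hardP θ) hardR μ ν s ≤ Vpol γ (hardP θ) hardR μ' ν' s := by
  have hx' := stayProb_mem_Icc hθ hμ' hν'
  rw [Vpol_hardP hγ0 hγ1 hθ hμ hν, Vpol_hardP hγ0 hγ1 hθ hμ' hν']
  dsimp only
  split_ifs
  · exact inv_anti₀ (by nlinarith [hx'.2]) (by nlinarith)
  · exact le_rfl

theorem isNashPair_hardP {γ : ℝ} (hγ0 : 0 ≤ γ) (hγ1 : γ < 1) {θ : Fin A → ℝ} {p : ℝ}
    (hθ0 : ∀ a, 0 ≤ θ a) (hθp : ∀ a, θ a ≤ p) (hp1 : p ≤ 1)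
    (hT : (univ.filter fun a => θ a = p).Nonempty) :
    IsNashPair γ (hardP θ) (hardR (S := n + 2) (A := A) (B := m + 1))
      (fun _ a => if θ a = p then ((univ.filter fun a' => θ a' = p).card : ℝ)⁻¹ else 0)
      (fun _ b => if b.val = 0 then 1 else 0) := by
  set μs : Fin (n + 2) → Fin A → ℝ :=
    fun _ a => if θ a = p then ((univ.filter fun a' => θ a' = p).card : ℝ)⁻¹ else 0
  set νs : Fin (n + 2) → Fin (m + 1) → ℝ := fun _ b => if b.val = 0 then 1 else 0
  have hθ : ∀ a, θ a ∈ Set.Icc 0 1 := fun a => ⟨hθ0 a, (hθp a).trans hp1⟩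
  have hμs : IsPolicy μs := by simpa [μs] using isPolicy_uniformOn (𝒮 := Fin (n + 2)) hT
  have hνs : IsPolicy νs := isPolicy_ite_val_eq_zero
  have hμs_avg : ∑ a, μs 0 a * θ a = p := by
    simpa [μs] using sum_uniformOn_mul hT (f := θ) (fun a ha => (mem_filter.mp ha).2)
  have hνs0 : νs 0 0 = 1 := if_pos rfl
  refine ⟨hμs, hνs, fun μ hμ s => ?_, fun ν hν s => ?_⟩
  · refine Vpol_hardP_le_of_stayProb_le hγ0 hγ1 hθ hμ hνs hμs hνs ?_ s
    simp only [stayProb, hνs0, hμs_avg]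
    linarith [hμ.sum_mul_le 0 hθp]
  · refine Vpol_hardP_le_of_stayProb_le hγ0 hγ1 hθ hμs hνs hμs hν ?_ s
    simp only [stayProb, hνs0, hμs_avg]
    nlinarith [hν.le_one 0 0]

theorem dOcc3_hardP_eq_zero {γ : ℝ} (hγ0 : 0 ≤ γ) (hγ1 : γ < 1) {θ : Fin A → ℝ}
    (hθ : ∀ a, θ a ∈ Set.Icc 0 1) {μ : Fin (n + 2) → Fin A → ℝ}
    {ν : Fin (n + 2) → Fin (m + 1) → ℝ} (hμ : IsPolicy μ) (hν : IsPolicy ν)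
    {s : Fin (n + 2)} (hs : 2 ≤ s.val) (a : Fin A) (b : Fin (m + 1)) :
    dOcc3 γ (hardP θ) μ ν (fun s => if s.val = 0 then 1 else 0) s a b = 0 := by
  have h0 : s ≠ 0 := by rintro rfl; simp at hs
  have h1 : s ≠ 1 := by rintro rfl; simp at hs
  rw [dOcc3, dOcc_hardP hγ0 hγ1 hθ hμ hν]
  simp [h0, h1]

theorem clipCoeff_hardP {γ : ℝ} (hγ0 : 0 ≤ γ) (hγ1 : γ < 1) {θ : Fin A → ℝ}
    (hθ : ∀ a, θ a ∈ Set.Icc 0 1) {a₀ : Fin A} (ha₀ : γ ≤ θ a₀)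
    {μs : Fin (n + 2) → Fin A → ℝ} (hμs : IsPolicy μs) {C : ℝ}
    (hC : 2 * (A : ℝ) * ((m + 1 : ℕ) : ℝ) /
      (((n + 2 : ℕ) : ℝ) * ((A : ℝ) + ((m + 1 : ℕ) : ℝ))) ≤ C) :
    clipCoeff γ (hardP θ) (fun s => if s.val = 0 then 1 else 0)
      (hardBehaviorDist (n + 2) A (m + 1) C) μs (fun _ b => if b.val = 0 then 1 else 0) =
      ENNReal.ofReal C := by
  have hνs := isPolicy_ite_val_eq_zero (𝒮 := Fin (n + 2)) (m := m)
  refine clipCoeff_eq_of_forall_le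
    (fun μ hμ s a b => clipRatio_hardBehaviorDist_le hC
      fun hs => dOcc3_hardP_eq_zero hγ0 hγ1 hθ hμ hνs hs a b)
    (fun ν hν s a b => clipRatio_hardBehaviorDist_le hC
      fun hs => dOcc3_hardP_eq_zero hγ0 hγ1 hθ hμs hν hs a b)
    (isPolicy_dirac a₀) (s := 0) (a := a₀) (b := 0) (clipRatio_hardBehaviorDist_eq hC rfl ?_)
  have hstay : stayProb θ (fun (_ : Fin (n + 2)) a => if a = a₀ then 1 else 0)
      (fun _ (b : Fin (m + 1)) => if b.val = 0 then 1 else 0) = θ a₀ := by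
    simp [stayProb]
  have hN : (2 : ℝ) ≤ ((n + 2 : ℕ) : ℝ) * ((A : ℝ) + ((m + 1 : ℕ) : ℝ)) := by
    push_cast; nlinarith
  have hθ₀ := hθ a₀
  rw [dOcc3, dOcc_hardP hγ0 hγ1 hθ (isPolicy_dirac a₀) hνs, hstay]
  simp only [Fin.val_zero, if_true, mul_one]
  calc _ ≤ (2 : ℝ)⁻¹ := inv_anti₀ two_pos hN
    _ ≤ (1 - γ) / (1 - γ * θ a₀) := by
      rw [le_div_iff₀ (by nlinarith [hθ₀.2])]; nlinarith [hθ₀.2]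

end HardInstance

end ZSMG

open ZSMG in
theorem statement11_general (S A B : ℕ) (hS : 2 ≤ S) (hB : 2 ≤ B)
    (γ ε : ℝ) (hγl : 2 / 3 ≤ γ) (hγu : γ < 1)
    (hε0 : 0 < ε) (hε1 : ε ≤ 1 / (42 * (1 - γ)))
    (θ : Fin A → ℝ)
    (hθ : ∀ a, θ a = γ + 14 * (1 - γ) ^ 2 * ε / γ ∨ θ a = γ - 14 * (1 - γ) ^ 2 * ε / γ)
    (hAp : (Finset.univ.filter fun a : Fin A => θ a = γ + 14 * (1 - γ) ^ 2 * ε / γ).Nonempty)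
    (C : ℝ) (hC : 2 * (A : ℝ) * (B : ℝ) / ((S : ℝ) * ((A : ℝ) + (B : ℝ))) ≤ C) :
    IsNashPair γ (hardP θ : Fin S → Fin A → Fin B → Fin S → ℝ)
      (hardR (S := S) (A := A) (B := B))
      (fun _ a => if θ a = γ + 14 * (1 - γ) ^ 2 * ε / γ then
          ((Finset.univ.filter fun a' : Fin A =>
            θ a' = γ + 14 * (1 - γ) ^ 2 * ε / γ).card : ℝ)⁻¹ else 0)
      (fun _ b => if b.val = 0 then 1 else 0) ∧
    clipCoeff γ (hardP θ : Fin S → Fin A → Fin B → Fin S → ℝ)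
      (fun s : Fin S => if s.val = 0 then 1 else 0)
      (fun (s : Fin S) (_ : Fin A) (_ : Fin B) =>
        if s.val = 0 then (C * (S : ℝ) * ((A : ℝ) + (B : ℝ)))⁻¹
        else if s.val = 1 then
          (1 - (A : ℝ) * (B : ℝ) / (C * (S : ℝ) * ((A : ℝ) + (B : ℝ)))) / ((A : ℝ) * (B : ℝ))
        else 0)
      (fun (_ : Fin S) (a : Fin A) => if θ a = γ + 14 * (1 - γ) ^ 2 * ε / γ then
          ((Finset.univ.filter fun a' : Fin A =>
            θ a' = γ + 14 * (1 - γ) ^ 2 * ε / γ).card : ℝ)⁻¹ else 0)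
      (fun (_ : Fin S) (b : Fin B) => if b.val = 0 then 1 else 0) = ENNReal.ofReal C := by
  obtain ⟨n, rfl⟩ := Nat.exists_eq_add_of_le' hS
  obtain ⟨m, rfl⟩ := Nat.exists_eq_add_of_le' (one_le_two.trans hB)
  have hγ0 : 0 < γ := by linarith
  have hδ0 : 0 ≤ 14 * (1 - γ) ^ 2 * ε / γ := by positivity
  have hδ1 : 14 * (1 - γ) ^ 2 * ε / γ ≤ (1 - γ) / 2 := by
    have hε : ε * (42 * (1 - γ)) ≤ 1 := (le_div_iff₀ (by linarith)).mp (by simpa using hε1)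
    rw [div_le_div_iff₀ hγ0 two_pos]
    nlinarith [sq_nonneg (1 - γ)]
  set p := γ + 14 * (1 - γ) ^ 2 * ε / γ
  have hθp : ∀ a, θ a ≤ p := fun a => by rcases hθ a with h | h <;> linarith
  have hθ0 : ∀ a, 0 ≤ θ a := fun a => by rcases hθ a with h | h <;> linarith
  have hp1 : p ≤ 1 := by linarith
  obtain ⟨a₀, ha₀⟩ := hAp
  have hθa₀ : θ a₀ = p := (Finset.mem_filter.mp ha₀).2
  have hNash := isNashPair_hardP (n := n) (m := m) hγ0.le hγu hθ0 hθp hp1 ⟨a₀, ha₀⟩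
  exact ⟨hNash, clipCoeff_hardP hγ0.le hγu (fun a => ⟨hθ0 a, (hθp a).trans hp1⟩)
    (a₀ := a₀) (by linarith) hNash.1 hC⟩

open ZSMG in
/-- `(μ*_θ, ν*_θ)` is a Nash equilibrium of the hard instance
`ℳ𝒢_θ`, and the clipped unilateral concentrability coefficient of
`{ℳ𝒢_θ, ρ, d_b}` equals `C`. -/
theorem statement11 (S A B : ℕ) (hS : 2 ≤ S) (hA : 2 ≤ A) (hB : 2 ≤ B)
    (γ ε : ℝ) (hγl : 2 / 3 ≤ γ) (hγu : γ < 1)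
    (hε0 : 0 < ε) (hε1 : ε ≤ 1 / (42 * (1 - γ)))
    (θ : Fin A → ℝ)
    (hθ : ∀ a, θ a = γ + 14 * (1 - γ) ^ 2 * ε / γ ∨ θ a = γ - 14 * (1 - γ) ^ 2 * ε / γ)
    (hAp : (Finset.univ.filter fun a : Fin A => θ a = γ + 14 * (1 - γ) ^ 2 * ε / γ).Nonempty)
    (C : ℝ) (hC : 2 * (A : ℝ) * (B : ℝ) / ((S : ℝ) * ((A : ℝ) + (B : ℝ))) ≤ C) :
    IsNashPair γ (hardP θ : Fin S → Fin A → Fin B → Fin S → ℝ)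
      (hardR (S := S) (A := A) (B := B))
      (fun _ a => if θ a = γ + 14 * (1 - γ) ^ 2 * ε / γ then
          ((Finset.univ.filter fun a' : Fin A =>
            θ a' = γ + 14 * (1 - γ) ^ 2 * ε / γ).card : ℝ)⁻¹ else 0)
      (fun _ b => if b.val = 0 then 1 else 0) ∧
    clipCoeff γ (hardP θ : Fin S → Fin A → Fin B → Fin S → ℝ)
      (fun s : Fin S => if s.val = 0 then 1 else 0)
      (fun (s : Fin S) (_ : Fin A) (_ : Fin B) =>
        if s.val = 0 then (C * (S : ℝ) * ((A : ℝ) + (B : ℝ)))⁻¹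
        else if s.val = 1 then
          (1 - (A : ℝ) * (B : ℝ) / (C * (S : ℝ) * ((A : ℝ) + (B : ℝ)))) / ((A : ℝ) * (B : ℝ))
        else 0)
      (fun (_ : Fin S) (a : Fin A) => if θ a = γ + 14 * (1 - γ) ^ 2 * ε / γ then
          ((Finset.univ.filter fun a' : Fin A =>
            θ a' = γ + 14 * (1 - γ) ^ 2 * ε / γ).card : ℝ)⁻¹ else 0)
      (fun (_ : Fin S) (b : Fin B) => if b.val = 0 then 1 else 0) = ENNReal.ofReal C :=
  statement11_general S A B hS hB γ ε hγl hγu hε0 hε1 θ hθ hAp C hC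
end
end

section
/- There exist universal constants c_ch > 0 and C̃₀ > 0, with c_ch independent of all other parameters, such that the following holds. Let A ≥ 2 be an integer, γ ∈ (0,1), c₂ > 0, ε ∈ (0, 1/((1−γ)·log A)], p₀ ∈ (0,1], C̃ ≥ C̃₀, and let N be a positive integer with C̃·(log A)/(1−γ) ≤ N·p₀ ≤ c₂/((1−γ)³ε²·log A). If M ~ Binomial(N, p₀), then P( (C̃/2)·(log A)/(1−γ) ≤ M ≤ (c₂ + √(8c₂/c_ch)) / ((1−γ)³ε²·log A) ) ≥ 1 − 2/A⁴. -/
open scoped BigOperators ENNReal Classical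

noncomputable section

section BinomHelpers

open ZSMG

lemma binomPMF_nonneg' {n k : ℕ} {p : ℝ} (h0 : 0 ≤ p) (h1 : p ≤ 1) :
    0 ≤ binomPMF n p k := by
  unfold binomPMF
  have : (0:ℝ) ≤ 1 - p := by linarith
  positivity

lemma binom_mgf' (n : ℕ) (p x : ℝ) :
    ∑ k ∈ Finset.range (n+1), binomPMF n p k * x ^ k = (p * x + (1 - p)) ^ n := by
  rw [add_pow]
  refine Finset.sum_congr rfl (fun k _ => ?_)
  unfold binomPMF
  rw [mul_pow]
  ring

lemma binom_sum_one' (n : ℕ) (p : ℝ) : ∑ k ∈ Finset.range (n+1), binomPMF n p k = 1 := by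
  have := binom_mgf' n p 1
  simp at this
  simpa using this

lemma binomProb_compl' (n : ℕ) (p : ℝ) (E : Set ℕ) :
    binomProb n p E = 1 - binomProb n p Eᶜ := by
  have h : ∀ k, E.indicator (binomPMF n p) k + Eᶜ.indicator (binomPMF n p) k
      = binomPMF n p k := fun k =>
    congrFun (Set.indicator_self_add_compl E (binomPMF n p)) k
  have hsum : binomProb n p E + binomProb n p Eᶜ = 1 := by
    unfold binomProb
    rw [← Finset.sum_add_distrib, Finset.sum_congr rfl (fun k _ => h k)]
    exact binom_sum_one' n p
  linarith

lemma binomProb_mono' {n : ℕ} {p : ℝ} (h0 : 0 ≤ p) (h1 : p ≤ 1) {E F : Set ℕ}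
    (hEF : E ⊆ F) : binomProb n p E ≤ binomProb n p F := by
  refine Finset.sum_le_sum (fun k _ => ?_)
  exact Set.indicator_le_indicator_of_subset hEF (fun _ => binomPMF_nonneg' h0 h1) k

lemma binomProb_union_le' {n : ℕ} {p : ℝ} (h0 : 0 ≤ p) (h1 : p ≤ 1) (E F : Set ℕ) :
    binomProb n p (E ∪ F) ≤ binomProb n p E + binomProb n p F := by
  unfold binomProb
  rw [← Finset.sum_add_distrib]
  refine Finset.sum_le_sum (fun k _ => ?_)
  by_cases hE : k ∈ E
  · by_cases hF : k ∈ F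
    · rw [Set.indicator_of_mem (Set.mem_union_left F hE), Set.indicator_of_mem hE,
        Set.indicator_of_mem hF]
      have := binomPMF_nonneg' (n := n) (k := k) h0 h1
      linarith
    · rw [Set.indicator_of_mem (Set.mem_union_left F hE), Set.indicator_of_mem hE,
        Set.indicator_of_notMem hF]
      simp
  · by_cases hF : k ∈ F
    · rw [Set.indicator_of_mem (Set.mem_union_right E hF), Set.indicator_of_notMem hE,
        Set.indicator_of_mem hF]
      simp
    · rw [Set.indicator_of_notMem (fun h => h.elim hE hF), Set.indicator_of_notMem hE,
        Set.indicator_of_notMem hF]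
      simp

lemma binom_tail_ge' (n : ℕ) (p a l : ℝ) (h0 : 0 ≤ p) (h1 : p ≤ 1) (hl : 0 ≤ l) :
    binomProb n p {M : ℕ | a ≤ (M : ℝ)} ≤
      Real.exp ((n : ℝ) * p * (Real.exp l - 1) - l * a) := by
  have key : ∀ k ∈ Finset.range (n+1),
      ({M : ℕ | a ≤ (M : ℝ)}).indicator (binomPMF n p) k
        ≤ Real.exp (-(l * a)) * (binomPMF n p k * (Real.exp l) ^ k) := by
    intro k _
    by_cases hk : k ∈ {M : ℕ | a ≤ (M : ℝ)}
    · rw [Set.indicator_of_mem hk]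
      have hmem : a ≤ (k : ℝ) := hk
      have h2 : (1:ℝ) ≤ Real.exp (-(l * a)) * Real.exp l ^ k := by
        rw [← Real.exp_nat_mul, ← Real.exp_add]
        rw [show (1:ℝ) = Real.exp 0 by simp]
        apply Real.exp_le_exp.2
        nlinarith
      nlinarith [binomPMF_nonneg' (n := n) (k := k) h0 h1]
    · rw [Set.indicator_of_notMem hk]
      have := binomPMF_nonneg' (n := n) (k := k) h0 h1
      positivity
  calc binomProb n p {M : ℕ | a ≤ (M : ℝ)}
      ≤ ∑ k ∈ Finset.range (n+1), Real.exp (-(l * a)) * (binomPMF n p k * (Real.exp l) ^ k) :=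
        Finset.sum_le_sum key
    _ = Real.exp (-(l * a)) * (p * Real.exp l + (1 - p)) ^ n := by
        rw [← Finset.mul_sum, binom_mgf']
    _ ≤ Real.exp (-(l * a)) * Real.exp ((n : ℝ) * (p * (Real.exp l - 1))) := by
        apply mul_le_mul_of_nonneg_left _ (Real.exp_nonneg _)
        rw [Real.exp_nat_mul]
        apply pow_le_pow_left₀
        · nlinarith [Real.exp_pos l]
        · nlinarith [Real.add_one_le_exp (p * (Real.exp l - 1))]
    _ = Real.exp ((n : ℝ) * p * (Real.exp l - 1) - l * a) := by
        rw [← Real.exp_add]; ring_nf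

lemma binom_tail_le' (n : ℕ) (p a l : ℝ) (h0 : 0 ≤ p) (h1 : p ≤ 1) (hl : 0 ≤ l) :
    binomProb n p {M : ℕ | (M : ℝ) ≤ a} ≤
      Real.exp ((n : ℝ) * p * (Real.exp (-l) - 1) + l * a) := by
  have key : ∀ k ∈ Finset.range (n+1),
      ({M : ℕ | (M : ℝ) ≤ a}).indicator (binomPMF n p) k
        ≤ Real.exp (l * a) * (binomPMF n p k * (Real.exp (-l)) ^ k) := by
    intro k _
    by_cases hk : k ∈ {M : ℕ | (M : ℝ) ≤ a}
    · rw [Set.indicator_of_mem hk]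
      have hmem : (k : ℝ) ≤ a := hk
      have h2 : (1:ℝ) ≤ Real.exp (l * a) * Real.exp (-l) ^ k := by
        rw [← Real.exp_nat_mul, ← Real.exp_add]
        rw [show (1:ℝ) = Real.exp 0 by simp]
        apply Real.exp_le_exp.2
        nlinarith
      nlinarith [binomPMF_nonneg' (n := n) (k := k) h0 h1]
    · rw [Set.indicator_of_notMem hk]
      have := binomPMF_nonneg' (n := n) (k := k) h0 h1
      positivity
  calc binomProb n p {M : ℕ | (M : ℝ) ≤ a}
      ≤ ∑ k ∈ Finset.range (n+1), Real.exp (l * a) * (binomPMF n p k * (Real.exp (-l)) ^ k) :=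
        Finset.sum_le_sum key
    _ = Real.exp (l * a) * (p * Real.exp (-l) + (1 - p)) ^ n := by
        rw [← Finset.mul_sum, binom_mgf']
    _ ≤ Real.exp (l * a) * Real.exp ((n : ℝ) * (p * (Real.exp (-l) - 1))) := by
        apply mul_le_mul_of_nonneg_left _ (Real.exp_nonneg _)
        rw [Real.exp_nat_mul]
        apply pow_le_pow_left₀
        · nlinarith [Real.exp_pos (-l)]
        · nlinarith [Real.add_one_le_exp (p * (Real.exp (-l) - 1))]
    _ = Real.exp ((n : ℝ) * p * (Real.exp (-l) - 1) + l * a) := by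
        rw [← Real.exp_add]; ring_nf

lemma exp_quad' {x : ℝ} (h0 : 0 ≤ x) (h1 : x ≤ 1) : Real.exp x ≤ 1 + x + x ^ 2 := by
  have habs : |x| ≤ 1 := abs_le.2 ⟨by linarith, h1⟩
  have := Real.exp_bound habs (n := 2) (by norm_num)
  simp [Finset.sum_range_succ] at this
  have h2 := abs_le.1 this
  nlinarith [sq_abs x, abs_nonneg x]

end BinomHelpers

set_option maxHeartbeats 1000000 in
open ZSMG in
/-- concentration of the binomial count `M_a`. -/
theorem statement12 :
    ∃ cch : ℝ, 0 < cch ∧ ∃ C₀ : ℝ, 0 < C₀ ∧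
      ∀ (A : ℕ), 2 ≤ A → ∀ γ : ℝ, 0 < γ → γ < 1 → ∀ c₂ : ℝ, 0 < c₂ →
      ∀ ε : ℝ, 0 < ε → ε ≤ 1 / ((1 - γ) * Real.log A) →
      ∀ p₀ : ℝ, 0 < p₀ → p₀ ≤ 1 → ∀ Ct : ℝ, C₀ ≤ Ct →
      ∀ N : ℕ, 0 < N →
        Ct * Real.log A / (1 - γ) ≤ (N : ℝ) * p₀ →
        (N : ℝ) * p₀ ≤ c₂ / ((1 - γ) ^ 3 * ε ^ 2 * Real.log A) →
        1 - 2 / (A : ℝ) ^ 4 ≤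
          binomProb N p₀ {M : ℕ |
            (Ct / 2) * Real.log A / (1 - γ) ≤ (M : ℝ) ∧
            (M : ℝ) ≤ (c₂ + Real.sqrt (8 * c₂ / cch)) / ((1 - γ) ^ 3 * ε ^ 2 * Real.log A)} := by
  refine ⟨1/4, by norm_num, 32, by norm_num, ?_⟩
  intro A hA γ hγ0 hγ1 c₂ hc₂ ε hε0 hε p₀ hp₀0 hp₀1 Ct hCt N hN hNp1 hNp2
  have hA2 : (2:ℝ) ≤ (A:ℝ) := by exact_mod_cast hA
  have hApos : (0:ℝ) < A := by linarith
  set L := Real.log A with hLdef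
  have hL : 0 < L := Real.log_pos (by linarith)
  have h1γ : 0 < 1 - γ := by linarith
  have h1γ1 : 1 - γ ≤ 1 := by linarith
  set m := (N : ℝ) * p₀ with hmdef
  have hNpos : (0:ℝ) < (N : ℝ) := by exact_mod_cast hN
  have hm0 : 0 < m := mul_pos hNpos hp₀0
  set X := (1 - γ) ^ 3 * ε ^ 2 * L with hXdef
  have hX : 0 < X := by positivity
  set D := 1 / X with hDdef
  have hD : 0 < D := by positivity
  have hm2 : m ≤ c₂ * D := by
    rw [hDdef, mul_one_div]; exact hNp2
  have hε1 : ε * ((1 - γ) * L) ≤ 1 := by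
    rw [← le_div_iff₀ (by positivity)]; exact hε
  have hXL : X * L ≤ 1 := by
    have ha0 : 0 ≤ ε * ((1 - γ) * L) := by positivity
    have h2 : ((1 - γ) * ε * L) ^ 2 ≤ 1 := by
      nlinarith [mul_le_mul hε1 hε1 ha0 zero_le_one]
    nlinarith [mul_le_mul_of_nonneg_left h2 h1γ.le]
  have hDL : L ≤ D := by
    rw [hDdef, le_div_iff₀ hX]; linarith [hXL]
  have hm_low : 32 * L ≤ m := by
    have h32 : 32 * L ≤ Ct * L / (1 - γ) := by
      rw [le_div_iff₀ h1γ]; nlinarith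
    linarith
  have hexp4 : Real.exp (-(4 * L)) = 1 / (A : ℝ) ^ 4 := by
    have h4 : Real.exp (4 * L) = (A : ℝ) ^ 4 := by
      rw [show (4:ℝ) * L = ((4:ℕ) : ℝ) * L by norm_num, Real.exp_nat_mul,
        hLdef, Real.exp_log hApos]
    rw [Real.exp_neg, h4, one_div]
  -- lower tail
  have hlow : binomProb N p₀ {M : ℕ | (M : ℝ) ≤ m / 2} ≤ 1 / (A : ℝ) ^ 4 := by
    have h := binom_tail_le' N p₀ (m / 2) (Real.log 2) hp₀0.le hp₀1
      (Real.log_nonneg one_le_two)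
    rw [← hmdef] at h
    have he : Real.exp (-Real.log 2) = 2⁻¹ := by
      rw [Real.exp_neg, Real.exp_log (by norm_num : (0:ℝ) < 2)]
    rw [he] at h
    refine h.trans ?_
    rw [← hexp4]
    apply Real.exp_le_exp.2
    have hlog2 : Real.log 2 < 0.6931471808 := Real.log_two_lt_d9
    nlinarith [mul_nonneg (by linarith : (0:ℝ) ≤ m - 32 * L)
      (by linarith : (0:ℝ) ≤ 1 - Real.log 2),
      mul_lt_mul_of_pos_left hlog2 hL]
  -- upper tail
  set t := Real.sqrt (32 * c₂) * D with htdef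
  have ht0 : 0 < t := mul_pos (Real.sqrt_pos.2 (by positivity)) hD
  have ht2 : t ^ 2 = 32 * c₂ * D ^ 2 := by
    rw [htdef, mul_pow, Real.sq_sqrt (by positivity : (0:ℝ) ≤ 32 * c₂)]
  have hhigh : binomProb N p₀ {M : ℕ | m + t ≤ (M : ℝ)} ≤ 1 / (A : ℝ) ^ 4 := by
    by_cases hcase : t ≤ 2 * m
    · set l := t / (2 * m) with hldef
      have hl0 : 0 ≤ l := by positivity
      have hl1 : l ≤ 1 := by
        rw [hldef, div_le_one (by linarith)]; linarith
      have h := binom_tail_ge' N p₀ (m + t) l hp₀0.le hp₀1 hl0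
      rw [← hmdef] at h
      refine h.trans ?_
      rw [← hexp4]
      apply Real.exp_le_exp.2
      have hexp : Real.exp l ≤ 1 + l + l ^ 2 := exp_quad' hl0 hl1
      have step1 : m * (Real.exp l - 1) - l * (m + t) ≤ m * l ^ 2 - l * t := by
        nlinarith
      have step2 : m * l ^ 2 - l * t = -(t ^ 2 / (4 * m)) := by
        rw [hldef]; field_simp; ring
      have step3 : -(t ^ 2 / (4 * m)) ≤ -(4 * L) := by
        rw [neg_le_neg_iff, le_div_iff₀ (by linarith : (0:ℝ) < 4 * m)]
        have e1 : 16 * L * m ≤ 16 * L * (c₂ * D) :=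
          mul_le_mul_of_nonneg_left hm2 (by positivity)
        have e2 : 16 * c₂ * D * L ≤ 16 * c₂ * D * D :=
          mul_le_mul_of_nonneg_left hDL (by positivity)
        have e3 : (0:ℝ) ≤ c₂ * D ^ 2 := by positivity
        nlinarith [ht2]
      linarith
    · push_neg at hcase
      have h := binom_tail_ge' N p₀ (m + t) 1 hp₀0.le hp₀1 zero_le_one
      rw [← hmdef] at h
      refine h.trans ?_
      rw [← hexp4]
      apply Real.exp_le_exp.2
      have he1 : Real.exp 1 < 2.7182818286 := Real.exp_one_lt_d9
      have ht32 : 32 * L ≤ t := by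
        have hc₂D : 32 * L ≤ c₂ * D := le_trans hm_low hm2
        have ht2' : (32 * L) ^ 2 ≤ t ^ 2 := by
          rw [ht2]
          nlinarith [mul_le_mul_of_nonneg_right hc₂D hD.le,
            mul_le_mul_of_nonneg_left hDL (by positivity : (0:ℝ) ≤ 32 * L)]
        nlinarith [ht0.le, hL.le]
      nlinarith
  -- combine
  set E : Set ℕ := {M : ℕ |
      Ct / 2 * L / (1 - γ) ≤ (M : ℝ) ∧
      (M : ℝ) ≤ (c₂ + Real.sqrt (8 * c₂ / (1 / 4))) / X} with hEdef
  have hsqrt : Real.sqrt (8 * c₂ / (1 / 4)) = Real.sqrt (32 * c₂) := by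
    norm_num [show (8:ℝ) * c₂ / (1 / 4) = 32 * c₂ by ring]
  have hsub : Eᶜ ⊆ {M : ℕ | (M : ℝ) ≤ m / 2} ∪ {M : ℕ | m + t ≤ (M : ℝ)} := by
    intro k hk
    simp only [hEdef, Set.mem_compl_iff, Set.mem_setOf_eq, not_and_or, not_le] at hk
    rcases hk with h | h
    · left
      have hhalf : Ct / 2 * L / (1 - γ) = Ct * L / (1 - γ) / 2 := by ring
      have : Ct / 2 * L / (1 - γ) ≤ m / 2 := by rw [hhalf]; linarith
      simp only [Set.mem_setOf_eq]
      linarith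
    · right
      have htX : t = Real.sqrt (32 * c₂) / X := by
        rw [htdef, hDdef, mul_one_div]
      have hub : m + t ≤ (c₂ + Real.sqrt (8 * c₂ / (1 / 4))) / X := by
        rw [hsqrt, add_div, ← htX]
        have : m ≤ c₂ / X := hNp2
        linarith
      simp only [Set.mem_setOf_eq]
      linarith
  have hEc : binomProb N p₀ Eᶜ ≤ 2 / (A : ℝ) ^ 4 := by
    calc binomProb N p₀ Eᶜ
        ≤ binomProb N p₀ ({M : ℕ | (M : ℝ) ≤ m / 2} ∪ {M : ℕ | m + t ≤ (M : ℝ)}) :=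
          binomProb_mono' hp₀0.le hp₀1 hsub
      _ ≤ binomProb N p₀ {M : ℕ | (M : ℝ) ≤ m / 2}
            + binomProb N p₀ {M : ℕ | m + t ≤ (M : ℝ)} :=
          binomProb_union_le' hp₀0.le hp₀1 _ _
      _ ≤ 1 / (A : ℝ) ^ 4 + 1 / (A : ℝ) ^ 4 := add_le_add hlow hhigh
      _ = 2 / (A : ℝ) ^ 4 := by ring
  have hcompl := binomProb_compl' N p₀ E
  linarith [hcompl, hEc]
end
end
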